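/- arXiv:1508.03913 — 8 statements merged into one kernel-verified Lean document; each statement's English description precedes it below -/
import Mathlib

section
/- Let (Ω, P, π) be a finite irreducible reversible Markov chain. Then for any states x, y ∈ Ω and any times s, t ≥ 0, we have P^{s+t}(x,y)/π(y) ≥ (1 - ‖P^t(x,·) - P^s(y,·)‖_TV)². -/
/-!
Reversibility gives `P^{s+t}(x,y)/π(y) = ∑ᵤ P^t(x,u) P^s(y,u) / π(u)`. Bounding `P^t(x,u) P^s(y,u)`
below by the square of their minimum and applying Cauchy–Schwarz against the weights `π` yields
`(∑ᵤ min (P^t(x,u)) (P^s(y,u)))²`, and the overlap `∑ᵤ min` of two probability vectors is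
`1` minus their total variation distance.
-/

open Finset Matrix

theorem sum_min_eq_one_sub_half_sum_abs_sub {ι : Type*} {s : Finset ι} {a b : ι → ℝ}
    (ha : ∑ i ∈ s, a i = 1) (hb : ∑ i ∈ s, b i = 1) :
    ∑ i ∈ s, min (a i) (b i) = 1 - 1 / 2 * ∑ i ∈ s, |a i - b i| := by
  have hmin : ∀ i, min (a i) (b i) = (a i + b i - |a i - b i|) / 2 := fun i => by
    linarith [min_add_max (a i) (b i), max_sub_min_eq_abs' (a i) (b i)]
  simp only [hmin, ← sum_div, sum_sub_distrib, sum_add_distrib, ha, hb]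
  ring

theorem sq_sum_min_div_sum_le_sum_mul_div {ι : Type*} {s : Finset ι} {a b w : ι → ℝ}
    (ha : ∀ i ∈ s, 0 ≤ a i) (hb : ∀ i ∈ s, 0 ≤ b i) (hw : ∀ i ∈ s, 0 < w i) :
    (∑ i ∈ s, min (a i) (b i)) ^ 2 / ∑ i ∈ s, w i ≤ ∑ i ∈ s, a i * b i / w i := by
  refine (sq_sum_div_le_sum_sq_div s _ hw).trans (sum_le_sum fun i hi => ?_)
  have hmin_sq : min (a i) (b i) ^ 2 ≤ a i * b i := by
    rw [sq]
    exact mul_le_mul (min_le_left _ _) (min_le_right _ _) (le_min (ha i hi) (hb i hi)) (ha i hi)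
  exact div_le_div_of_nonneg_right hmin_sq (hw i hi).le

section DetailedBalance

variable {n R : Type*} [Fintype n] [DecidableEq n]

theorem detailedBalance_pow [CommSemiring R] {P : Matrix n n R} {π : n → R}
    (hrev : ∀ x y, π x * P x y = π y * P y x) (k : ℕ) (x y : n) :
    π x * (P ^ k) x y = π y * (P ^ k) y x := by
  have hsemiconj : SemiconjBy (diagonal π) P Pᵀ := by
    ext u v
    simp [diagonal_mul, mul_diagonal, hrev u v, mul_comm]
  have h := congrFun₂ (hsemiconj.pow_right k).eq x y
  simpa [diagonal_mul, mul_diagonal, ← transpose_pow, mul_comm] using h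

theorem pow_add_apply_div_eq_sum [Field R] {P : Matrix n n R} {π : n → R}
    (hπ : ∀ x, π x ≠ 0) (hrev : ∀ x y, π x * P x y = π y * P y x) (s t : ℕ) (x y : n) :
    (P ^ (s + t)) x y / π y = ∑ u, (P ^ t) x u * (P ^ s) y u / π u := by
  rw [add_comm, pow_add, mul_apply, sum_div]
  refine sum_congr rfl fun u _ => ?_
  rw [div_eq_div_iff (hπ y) (hπ u)]
  linear_combination (P ^ t) x u * detailedBalance_pow hrev s u y

end DetailedBalance

theorem stmt0_general {Ω : Type*} [Fintype Ω] [DecidableEq Ω]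
    (P : Matrix Ω Ω ℝ) (π : Ω → ℝ)
    (hP0 : ∀ x y, 0 ≤ P x y) (hP1 : ∀ x, ∑ y, P x y = 1)
    (hπ0 : ∀ x, 0 < π x) (hπ1 : ∑ x, π x = 1)
    (hrev : ∀ x y, π x * P x y = π y * P y x)
    (x y : Ω) (s t : ℕ) :
    (P ^ (s + t)) x y / π y ≥
      (1 - (1 / 2) * ∑ u, |(P ^ t) x u - (P ^ s) y u|) ^ 2 := by
  have hpow : ∀ k, P ^ k ∈ rowStochastic ℝ Ω :=
    pow_mem (mem_rowStochastic_iff_sum.2 ⟨hP0, hP1⟩)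
  rw [ge_iff_le, pow_add_apply_div_eq_sum (fun u => (hπ0 u).ne') hrev,
    ← sum_min_eq_one_sub_half_sum_abs_sub (sum_row_of_mem_rowStochastic (hpow t) x)
      (sum_row_of_mem_rowStochastic (hpow s) y)]
  simpa only [hπ1, div_one] using sq_sum_min_div_sum_le_sum_mul_div (s := univ) (a := fun u => (P ^ t) x u)
    (b := fun u => (P ^ s) y u) (fun u _ => nonneg_of_mem_rowStochastic (hpow t))
    (fun u _ => nonneg_of_mem_rowStochastic (hpow s)) (fun u _ => hπ0 u)

/-- For a finite irreducible reversible Markov chain `(Ω, P, π)`,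
for all states `x, y` and times `s, t ≥ 0`,
`P^{s+t}(x,y)/π(y) ≥ (1 - ‖P^t(x,·) - P^s(y,·)‖_TV)²`. -/
theorem stmt0 {Ω : Type*} [Fintype Ω] [Nonempty Ω] [DecidableEq Ω]
    (P : Matrix Ω Ω ℝ) (π : Ω → ℝ)
    (hP0 : ∀ x y, 0 ≤ P x y) (hP1 : ∀ x, ∑ y, P x y = 1)
    (hπ0 : ∀ x, 0 < π x) (hπ1 : ∑ x, π x = 1)
    (hrev : ∀ x y, π x * P x y = π y * P y x)
    (hirr : ∀ x y, ∃ t : ℕ, 0 < (P ^ t) x y)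
    (x y : Ω) (s t : ℕ) :
    (P ^ (s + t)) x y / π y ≥
      (1 - (1 / 2) * ∑ u, |(P ^ t) x u - (P ^ s) y u|) ^ 2 :=
  stmt0_general P π hP0 hP1 hπ0 hπ1 hrev x y s t
end

section
/- Let (Ω, P, π) be a finite irreducible reversible Markov chain, and x, y ∈ Ω, s, t ≥ 0. If d_x(t) + d_y(s) ≤ 1, where d_x(t) := ‖P^t(x,·) - π‖_TV, then P^{s+t}(x,y)/π(y) ≥ (1 - d_x(t) - d_y(s))². -/
/-!
By reversibility, `P^{s+t}(x,y)/π(y) = ∑ᵤ P^t(x,u) P^s(y,u) / π(u)`. By Cauchy–Schwarz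
(in Sedrakyan's form) this is at least `(∑ᵤ min(P^t(x,u), P^s(y,u)))²`, and the overlap of the
two distributions is at least `1 - d_x(t) - d_y(s)` because `∑ᵤ min(μ(u), π(u)) = 1 - ‖μ - π‖_TV`.
-/

open Finset

section Overlap

variable {ι : Type*} [Fintype ι]

theorem min_add_min_sub_le_min {α : Type*} [AddCommGroup α] [LinearOrder α]
    [IsOrderedAddMonoid α] (a b c : α) : min a c + min b c - c ≤ min a b := by
  refine le_min (sub_le_iff_le_add.2 ?_) (sub_le_iff_le_add'.2 ?_)
  · exact add_le_add (min_le_left a c) (min_le_right b c)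
  · exact add_le_add (min_le_right a c) (min_le_left b c)

theorem sum_min_eq_one_sub_half_sum_abs_sub_s1 {μ π : ι → ℝ} (hμ : ∑ u, μ u = 1)
    (hπ : ∑ u, π u = 1) : ∑ u, min (μ u) (π u) = 1 - 1 / 2 * ∑ u, |μ u - π u| := by
  have hmin : ∀ u, min (μ u) (π u) = (μ u + π u - |μ u - π u|) / 2 := fun u => by
    rcases le_total (μ u) (π u) with h | h
    · rw [min_eq_left h, abs_of_nonpos (sub_nonpos.2 h)]; ring
    · rw [min_eq_right h, abs_of_nonneg (sub_nonneg.2 h)]; ring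
  simp only [hmin, ← sum_div, sum_sub_distrib, sum_add_distrib, hμ, hπ]
  ring

theorem one_sub_tv_sub_tv_le_sum_min {μ ν π : ι → ℝ} (hμ : ∑ u, μ u = 1)
    (hν : ∑ u, ν u = 1) (hπ : ∑ u, π u = 1) :
    1 - 1 / 2 * ∑ u, |μ u - π u| - 1 / 2 * ∑ u, |ν u - π u| ≤ ∑ u, min (μ u) (ν u) := by
  have h := sum_le_sum fun u (_ : u ∈ univ) => min_add_min_sub_le_min (μ u) (ν u) (π u)
  rw [sum_sub_distrib, sum_add_distrib, sum_min_eq_one_sub_half_sum_abs_sub_s1 hμ hπ,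
    sum_min_eq_one_sub_half_sum_abs_sub_s1 hν hπ, hπ] at h
  linarith

theorem sq_sum_min_le_sum_mul_div {μ ν π : ι → ℝ} (hμ : ∀ u, 0 ≤ μ u) (hν : ∀ u, 0 ≤ ν u)
    (hπ0 : ∀ u, 0 < π u) (hπ1 : ∑ u, π u = 1) :
    (∑ u, min (μ u) (ν u)) ^ 2 ≤ ∑ u, μ u * ν u / π u :=
  calc (∑ u, min (μ u) (ν u)) ^ 2
      = (∑ u, min (μ u) (ν u)) ^ 2 / ∑ u, π u := by rw [hπ1, div_one]
    _ ≤ ∑ u, min (μ u) (ν u) ^ 2 / π u := sq_sum_div_le_sum_sq_div _ _ fun u _ => hπ0 u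
    _ ≤ ∑ u, μ u * ν u / π u := by
      gcongr with u
      · exact (hπ0 u).le
      · rw [sq]
        exact mul_le_mul (min_le_left _ _) (min_le_right _ _) (le_min (hμ u) (hν u)) (hμ u)

end Overlap

namespace Matrix

variable {n R : Type*} [Fintype n] [DecidableEq n] [CommSemiring R]

theorem reversible_pow {P : Matrix n n R} {π : n → R}
    (hrev : ∀ x y, π x * P x y = π y * P y x) (k : ℕ) (x y : n) :
    π x * (P ^ k) x y = π y * (P ^ k) y x := by
  -- Reversibility says `diagonal π * P = Pᵀ * diagonal π`, which passes to powers.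
  have hsemi : SemiconjBy (diagonal π) P Pᵀ := by
    ext x y
    rw [diagonal_mul, mul_diagonal, transpose_apply, hrev, mul_comm]
  have h := congrFun₂ (hsemi.pow_right k) x y
  rw [diagonal_mul, ← transpose_pow, mul_diagonal, transpose_apply] at h
  rw [h, mul_comm]

theorem pow_add_apply_eq_mul_sum_div {P : Matrix n n ℝ} {π : n → ℝ} (hπ : ∀ u, π u ≠ 0)
    (hrev : ∀ x y, π x * P x y = π y * P y x) (s t : ℕ) (x y : n) :
    (P ^ (s + t)) x y = π y * ∑ u, (P ^ t) x u * (P ^ s) y u / π u := by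
  rw [add_comm, pow_add, mul_apply, mul_sum]
  refine sum_congr rfl fun u _ => ?_
  rw [← mul_div_assoc, eq_div_iff (hπ u)]
  linear_combination (P ^ t) x u * reversible_pow hrev s u y

end Matrix

theorem stmt1_general {Ω : Type*} [Fintype Ω] [DecidableEq Ω]
    (P : Matrix Ω Ω ℝ) (π : Ω → ℝ)
    (hP0 : ∀ x y, 0 ≤ P x y) (hP1 : ∀ x, ∑ y, P x y = 1)
    (hπ0 : ∀ x, 0 < π x) (hπ1 : ∑ x, π x = 1)
    (hrev : ∀ x y, π x * P x y = π y * P y x)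
    (x y : Ω) (s t : ℕ)
    (hsum : (1 / 2) * (∑ u, |(P ^ t) x u - π u|) +
            (1 / 2) * (∑ u, |(P ^ s) y u - π u|) ≤ 1) :
    (P ^ (s + t)) x y / π y ≥
      (1 - (1 / 2) * (∑ u, |(P ^ t) x u - π u|) -
           (1 / 2) * (∑ u, |(P ^ s) y u - π u|)) ^ 2 := by
  have hP : P ∈ Matrix.rowStochastic ℝ Ω := Matrix.mem_rowStochastic_iff_sum.2 ⟨hP0, hP1⟩
  have hPt := pow_mem hP t
  have hPs := pow_mem hP s
  have hoverlap := one_sub_tv_sub_tv_le_sum_min (Matrix.sum_row_of_mem_rowStochastic hPt x)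
    (Matrix.sum_row_of_mem_rowStochastic hPs y) hπ1
  calc (1 - (1 / 2) * (∑ u, |(P ^ t) x u - π u|) - (1 / 2) * (∑ u, |(P ^ s) y u - π u|)) ^ 2
      ≤ (∑ u, min ((P ^ t) x u) ((P ^ s) y u)) ^ 2 :=
        pow_le_pow_left₀ (by linarith) hoverlap 2
    _ ≤ ∑ u, (P ^ t) x u * (P ^ s) y u / π u :=
        sq_sum_min_le_sum_mul_div (fun _ => Matrix.nonneg_of_mem_rowStochastic hPt)
          (fun _ => Matrix.nonneg_of_mem_rowStochastic hPs) hπ0 hπ1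
    _ = (P ^ (s + t)) x y / π y := by
        rw [Matrix.pow_add_apply_eq_mul_sum_div (fun u => (hπ0 u).ne') hrev,
          mul_div_cancel_left₀ _ (hπ0 y).ne']

/-- For a finite irreducible reversible Markov chain, if
`d_x(t) + d_y(s) ≤ 1` (with `d_x(t)` the TV distance of the time-`t` distribution
started at `x` from `π`), then `P^{s+t}(x,y)/π(y) ≥ (1 - d_x(t) - d_y(s))²`. -/
theorem stmt1 {Ω : Type*} [Fintype Ω] [Nonempty Ω] [DecidableEq Ω]
    (P : Matrix Ω Ω ℝ) (π : Ω → ℝ)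
    (hP0 : ∀ x y, 0 ≤ P x y) (hP1 : ∀ x, ∑ y, P x y = 1)
    (hπ0 : ∀ x, 0 < π x) (hπ1 : ∑ x, π x = 1)
    (hrev : ∀ x y, π x * P x y = π y * P y x)
    (hirr : ∀ x y, ∃ t : ℕ, 0 < (P ^ t) x y)
    (x y : Ω) (s t : ℕ)
    (hsum : (1 / 2) * (∑ u, |(P ^ t) x u - π u|) +
            (1 / 2) * (∑ u, |(P ^ s) y u - π u|) ≤ 1) :
    (P ^ (s + t)) x y / π y ≥
      (1 - (1 / 2) * (∑ u, |(P ^ t) x u - π u|) -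
           (1 / 2) * (∑ u, |(P ^ s) y u - π u|)) ^ 2 :=
  stmt1_general P π hP0 hP1 hπ0 hπ1 hrev x y s t hsum
end

section
/- Let (Ω, P, π) be a finite irreducible lazy reversible Markov chain and let x, y, z ∈ Ω. Then for all t ≥ 0, P^t(x,y)/π(y) ≥ P_x[T_y ≤ t], where T_y is the hitting time of y started from x. -/
open Finset

/-- `hitProb P z t x` is the probability that the chain with transition matrix `P`
started at `x` hits `z` for the first time exactly at time `t`, i.e. `P_x[T_z = t]`. -/
noncomputable def hitProb {Ω : Type*} [Fintype Ω] [DecidableEq Ω]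
    (P : Matrix Ω Ω ℝ) (z : Ω) : ℕ → Ω → ℝ
  | 0, x => if x = z then 1 else 0
  | (t + 1), x => if x = z then 0 else ∑ y, P x y * hitProb P z t y

section
variable {Ω : Type*} [Fintype Ω] [DecidableEq Ω]

lemma pow_entry_succL (P : Matrix Ω Ω ℝ) (t : ℕ) (x y : Ω) :
    (P ^ (t+1)) x y = ∑ z, P x z * (P ^ t) z y := by
  rw [pow_succ', Matrix.mul_apply]

lemma pow_entry_succR (P : Matrix Ω Ω ℝ) (t : ℕ) (x y : Ω) :
    (P ^ (t+1)) x y = ∑ z, (P ^ t) x z * P z y := by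
  rw [pow_succ, Matrix.mul_apply]

lemma pow_entry_nonneg (P : Matrix Ω Ω ℝ) (hP0 : ∀ x y, 0 ≤ P x y) :
    ∀ t x y, 0 ≤ (P ^ t) x y := by
  intro t
  induction t with
  | zero => intro x y; rw [pow_zero, Matrix.one_apply]; positivity
  | succ t ih =>
    intro x y
    rw [pow_entry_succL]
    exact Finset.sum_nonneg fun z _ => mul_nonneg (hP0 x z) (ih z y)

lemma pow_rowsum (P : Matrix Ω Ω ℝ) (hP1 : ∀ x, ∑ y, P x y = 1) :
    ∀ t x, ∑ y, (P ^ t) x y = 1 := by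
  intro t
  induction t with
  | zero => intro x; simp [Matrix.one_apply]
  | succ t ih =>
    intro x
    simp only [pow_entry_succL]
    rw [Finset.sum_comm]
    calc ∑ z, ∑ y, P x z * (P ^ t) z y = ∑ z, P x z * ∑ y, (P ^ t) z y := by
          simp [Finset.mul_sum]
      _ = 1 := by simp [ih, hP1]

lemma pow_rev (P : Matrix Ω Ω ℝ) (π : Ω → ℝ)
    (hrev : ∀ x y, π x * P x y = π y * P y x) :
    ∀ t x y, π x * (P ^ t) x y = π y * (P ^ t) y x := by
  intro t
  induction t with
  | zero => intro x y; by_cases h : x = y <;> simp [Matrix.one_apply, h, Ne.symm]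
  | succ t ih =>
    intro x y
    rw [pow_entry_succR, pow_entry_succL (t := t) (x := y), Finset.mul_sum, Finset.mul_sum]
    refine Finset.sum_congr rfl fun u _ => ?_
    calc π x * ((P ^ t) x u * P u y) = (π u * (P ^ t) u x) * P u y := by rw [← ih]; ring
      _ = (P ^ t) u x * (π u * P u y) := by ring
      _ = (P ^ t) u x * (π y * P y u) := by rw [hrev]
      _ = π y * (P y u * (P ^ t) u x) := by ring

lemma pow_stat (P : Matrix Ω Ω ℝ) (π : Ω → ℝ)
    (hP1 : ∀ x, ∑ y, P x y = 1)
    (hrev : ∀ x y, π x * P x y = π y * P y x) (t : ℕ) (w : Ω) :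
    ∑ z, π z * (P ^ t) z w = π w := by
  calc ∑ z, π z * (P ^ t) z w = ∑ z, π w * (P ^ t) w z := by
        exact Finset.sum_congr rfl fun z _ => pow_rev P π hrev t z w
    _ = π w := by rw [← Finset.mul_sum, pow_rowsum P hP1, mul_one]

end

section
variable {Ω : Type*} [Fintype Ω] [DecidableEq Ω]

lemma qform (P : Matrix Ω Ω ℝ) (π : Ω → ℝ)
    (hP0 : ∀ x y, 0 ≤ P x y) (hP1 : ∀ x, ∑ y, P x y = 1)
    (hπ0 : ∀ x, 0 < π x)
    (hrev : ∀ x y, π x * P x y = π y * P y x)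
    (hlazy : ∀ x, (1 : ℝ) / 2 ≤ P x x) (h : Ω → ℝ) :
    0 ≤ ∑ z, ∑ w, π z * P z w * h z * h w := by
  have stat : ∀ w, ∑ z, π z * P z w = π w := by
    intro w
    have := pow_stat P π hP1 hrev 1 w
    simpa using this
  have key : ∀ z w : Ω, π z * P z w * h z * h w
      = π z * P z w * (h z + h w)^2 / 2 - π z * P z w * (h z)^2 / 2
        - π z * P z w * (h w)^2 / 2 := by intro z w; ring
  have e1 : ∑ z, ∑ w, π z * P z w * (h z)^2 = ∑ z, π z * (h z)^2 := by
    refine Finset.sum_congr rfl fun z _ => ?_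
    rw [← Finset.sum_mul]
    rw [show ∑ w, π z * P z w = π z from by rw [← Finset.mul_sum, hP1, mul_one]]
  have e2 : ∑ z, ∑ w, π z * P z w * (h w)^2 = ∑ w, π w * (h w)^2 := by
    rw [Finset.sum_comm]
    refine Finset.sum_congr rfl fun w _ => ?_
    rw [← Finset.sum_mul, stat]
  have e3 : ∑ z, π z * (h z)^2 ≤ (∑ z, ∑ w, π z * P z w * (h z + h w)^2) / 2 := by
    rw [le_div_iff₀ (by norm_num : (0:ℝ) < 2)]
    have diag : ∀ z : Ω, π z * (h z)^2 * 2 ≤ ∑ w, π z * P z w * (h z + h w)^2 := by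
      intro z
      have hs : π z * P z z * (h z + h z)^2 ≤ ∑ w, π z * P z w * (h z + h w)^2 := by
        refine Finset.single_le_sum (f := fun w => π z * P z w * (h z + h w)^2)
          (fun w _ => mul_nonneg (mul_nonneg (hπ0 z).le (hP0 z w)) (sq_nonneg _))
          (Finset.mem_univ z)
      refine le_trans ?_ hs
      nlinarith [hlazy z, sq_nonneg (h z), (hπ0 z).le,
        mul_nonneg (hπ0 z).le (sq_nonneg (h z))]
    calc (∑ z, π z * (h z)^2) * 2 = ∑ z, π z * (h z)^2 * 2 := by rw [Finset.sum_mul]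
      _ ≤ ∑ z, ∑ w, π z * P z w * (h z + h w)^2 := Finset.sum_le_sum fun z _ => diag z
  have expand : ∑ z, ∑ w, π z * P z w * h z * h w
      = (∑ z, ∑ w, π z * P z w * (h z + h w)^2) / 2
        - (∑ z, ∑ w, π z * P z w * (h z)^2) / 2
        - (∑ z, ∑ w, π z * P z w * (h w)^2) / 2 := by
    rw [show (∑ z, ∑ w, π z * P z w * h z * h w)
        = ∑ z : Ω, ∑ w : Ω, (π z * P z w * (h z + h w)^2 / 2 - π z * P z w * (h z)^2 / 2
            - π z * P z w * (h w)^2 / 2) from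
      Finset.sum_congr rfl fun z _ => Finset.sum_congr rfl fun w _ => key z w]
    simp only [Finset.sum_sub_distrib, ← Finset.sum_div]
  rw [expand, e1, e2]
  linarith

end

section
variable {Ω : Type*} [Fintype Ω] [DecidableEq Ω]

lemma diag_ge (P : Matrix Ω Ω ℝ) (π : Ω → ℝ)
    (hP0 : ∀ x y, 0 ≤ P x y) (hP1 : ∀ x, ∑ y, P x y = 1)
    (hπ0 : ∀ x, 0 < π x) (hπ1 : ∑ x, π x = 1)
    (hrev : ∀ x y, π x * P x y = π y * P y x)
    (hlazy : ∀ x, (1 : ℝ) / 2 ≤ P x x) (y : Ω) (t : ℕ) :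
    π y ≤ (P ^ t) y y := by
  have stat : ∀ w, ∑ z, π z * P z w = π w := fun w => by
    simpa using pow_stat P π hP1 hrev 1 w
  set g : Ω → ℝ := fun z => (P ^ (t / 2)) z y with hg
  have hgstat : ∑ z, π z * g z = π y := pow_stat P π hP1 hrev (t/2) y
  have main : π y * π y ≤ π y * (P ^ t) y y := by
    rcases Nat.even_or_odd t with ⟨s, hs⟩ | ⟨s, hs⟩
    · -- t = s + s
      have hs2 : t / 2 = s := by omega
      have entry : π y * (P ^ t) y y = ∑ z, π z * g z * g z := by
        rw [hs, pow_add, Matrix.mul_apply, Finset.mul_sum]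
        refine Finset.sum_congr rfl fun z _ => ?_
        have hr := pow_rev P π hrev s y z
        simp only [hg, hs2]
        calc π y * ((P ^ s) y z * (P ^ s) z y)
            = (π y * (P ^ s) y z) * (P ^ s) z y := by ring
          _ = (π z * (P ^ s) z y) * (P ^ s) z y := by rw [hr]
          _ = π z * (P ^ s) z y * (P ^ s) z y := by ring
      have cs : 0 ≤ ∑ z, π z * (g z - π y)^2 :=
        Finset.sum_nonneg fun z _ => mul_nonneg (hπ0 z).le (sq_nonneg _)
      have expand : ∑ z, π z * (g z - π y)^2
          = ∑ z, (π z * g z * g z - 2 * π y * (π z * g z) + (π y * π y) * π z) :=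
        Finset.sum_congr rfl fun z _ => by ring
      rw [expand, Finset.sum_add_distrib, Finset.sum_sub_distrib, ← Finset.mul_sum,
        ← Finset.mul_sum, hgstat, hπ1] at cs
      rw [entry]
      linarith
    · -- t = 2s + 1
      have hs2 : t / 2 = s := by omega
      have entry : π y * (P ^ t) y y = ∑ z, ∑ w, π z * P z w * g z * g w := by
        have hpow : (P ^ t) = (P ^ s) * P * (P ^ s) := by
          rw [hs, show 2*s+1 = s+1+s from by omega, pow_add, pow_add, pow_one]
        rw [hpow, Matrix.mul_apply, Finset.mul_sum]
        rw [show (∑ z, π y * (((P ^ s) * P) y z * (P ^ s) z y))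
            = ∑ z, ∑ w, π w * P w z * g w * g z from ?_]
        · exact Finset.sum_comm
        refine Finset.sum_congr rfl fun z _ => ?_
        rw [Matrix.mul_apply, Finset.sum_mul, Finset.mul_sum]
        refine Finset.sum_congr rfl fun w _ => ?_
        have hr := pow_rev P π hrev s y w
        simp only [hg, hs2]
        calc π y * ((P ^ s) y w * P w z * (P ^ s) z y)
            = (π y * (P ^ s) y w) * (P w z * (P ^ s) z y) := by ring
          _ = (π w * (P ^ s) w y) * (P w z * (P ^ s) z y) := by rw [hr]
          _ = π w * P w z * (P ^ s) w y * (P ^ s) z y := by ring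
      have hq : 0 ≤ ∑ z, ∑ w, π z * P z w * (g z - π y) * (g w - π y) :=
        qform P π hP0 hP1 hπ0 hrev hlazy (fun z => g z - π y)
      have A1 : ∑ z, ∑ w, π z * P z w * g z = π y := by
        rw [← hgstat]
        refine Finset.sum_congr rfl fun z _ => ?_
        calc ∑ w, π z * P z w * g z = π z * g z * ∑ w, P z w := by
              rw [Finset.mul_sum]; exact Finset.sum_congr rfl fun w _ => by ring
          _ = π z * g z := by rw [hP1, mul_one]
      have A2 : ∑ z, ∑ w, π z * P z w * g w = π y := by
        rw [Finset.sum_comm, ← hgstat]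
        refine Finset.sum_congr rfl fun w _ => ?_
        rw [show (∑ z, π z * P z w * g w) = (∑ z, π z * P z w) * g w from by
          rw [Finset.sum_mul], stat]
      have A3 : ∑ z, ∑ w, π z * P z w = 1 := by
        rw [← hπ1]
        refine Finset.sum_congr rfl fun z _ => ?_
        rw [← Finset.mul_sum, hP1, mul_one]
      have split : ∑ z, ∑ w, π z * P z w * (g z - π y) * (g w - π y)
          = (∑ z, ∑ w, π z * P z w * g z * g w) - π y * (∑ z, ∑ w, π z * P z w * g z)
            - π y * (∑ z, ∑ w, π z * P z w * g w)
            + (π y * π y) * (∑ z, ∑ w, π z * P z w) := by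
        simp only [Finset.mul_sum]
        rw [← Finset.sum_sub_distrib, ← Finset.sum_sub_distrib, ← Finset.sum_add_distrib]
        refine Finset.sum_congr rfl fun z _ => ?_
        rw [← Finset.sum_sub_distrib, ← Finset.sum_sub_distrib, ← Finset.sum_add_distrib]
        exact Finset.sum_congr rfl fun w _ => by ring
      rw [split, A1, A2, A3] at hq
      rw [entry]
      linarith
  exact (mul_le_mul_iff_right₀ (hπ0 y)).mp main

end

section
variable {Ω : Type*} [Fintype Ω] [DecidableEq Ω]

lemma hitProb_nonneg (P : Matrix Ω Ω ℝ) (hP0 : ∀ x y, 0 ≤ P x y) (z : Ω) :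
    ∀ t x, 0 ≤ hitProb P z t x := by
  intro t
  induction t with
  | zero => intro x; simp only [hitProb]; positivity
  | succ t ih =>
    intro x
    simp only [hitProb]
    split
    · exact le_refl 0
    · exact Finset.sum_nonneg fun w _ => mul_nonneg (hP0 x w) (ih w)

lemma decomp (P : Matrix Ω Ω ℝ) (y : Ω) :
    ∀ t x, (P ^ t) x y = ∑ k ∈ Finset.range (t+1), hitProb P y k x * (P ^ (t - k)) y y := by
  intro t
  induction t with
  | zero =>
    intro x
    simp [hitProb, Matrix.one_apply]
  | succ t ih =>
    intro x
    rw [Finset.sum_range_succ']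
    by_cases hx : x = y
    · subst hx
      have hz : ∀ k ∈ Finset.range (t+1), hitProb P x (k+1) x * (P ^ (t+1-(k+1))) x x = 0 := by
        intro k _
        simp [hitProb]
      rw [Finset.sum_eq_zero hz]
      simp [hitProb]
    · have h0 : hitProb P y 0 x * (P ^ (t + 1 - 0)) y y = 0 := by
        simp [hitProb, hx]
      rw [h0, add_zero]
      have hterm : ∀ k ∈ Finset.range (t+1),
          hitProb P y (k+1) x * (P ^ (t+1-(k+1))) y y
          = ∑ z, P x z * (hitProb P y k z * (P ^ (t - k)) y y) := by
        intro k _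
        simp only [hitProb, hx, if_false, Nat.succ_sub_succ]
        rw [Finset.sum_mul]
        exact Finset.sum_congr rfl fun z _ => by ring
      rw [Finset.sum_congr rfl hterm, Finset.sum_comm, pow_entry_succL]
      refine Finset.sum_congr rfl fun z _ => ?_
      rw [← Finset.mul_sum, ih z]

end

/-- For a finite irreducible lazy reversible Markov chain and
`x, y ∈ Ω`, for all `t ≥ 0`, `P^t(x,y)/π(y) ≥ P_x[T_y ≤ t]`. -/
theorem stmt3 {Ω : Type*} [Fintype Ω] [Nonempty Ω] [DecidableEq Ω]
    (P : Matrix Ω Ω ℝ) (π : Ω → ℝ)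
    (hP0 : ∀ x y, 0 ≤ P x y) (hP1 : ∀ x, ∑ y, P x y = 1)
    (hπ0 : ∀ x, 0 < π x) (hπ1 : ∑ x, π x = 1)
    (hrev : ∀ x y, π x * P x y = π y * P y x)
    (hirr : ∀ x y, ∃ t : ℕ, 0 < (P ^ t) x y)
    (hlazy : ∀ x, (1 : ℝ) / 2 ≤ P x x)
    (x y : Ω) (t : ℕ) :
    (P ^ t) x y / π y ≥ ∑ k ∈ Finset.range (t + 1), hitProb P y k x := by

  rw [ge_iff_le, le_div_iff₀ (hπ0 y), Finset.sum_mul, decomp P y t x]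
  refine Finset.sum_le_sum fun k _ => ?_
  exact mul_le_mul_of_nonneg_left
    (diag_ge P π hP0 hP1 hπ0 hπ1 hrev hlazy y (t - k))
    (hitProb_nonneg P hP0 y k x)
end

section
/- Let (Ω, P, π) be a finite irreducible lazy reversible Markov chain and Z ⊂ Ω. Then for all s ≥ 0, P_{π_Z}^s(Z) ≥ π(Z), where π_Z is π conditioned on Z and P_{π_Z}^s(Z) = Σ_{z,z'∈Z} π_Z(z) P^s(z,z'). -/
/-!
Detailed balance says that `D_π P` is symmetric, where `D_π = diagonal π`. Laziness makes it
positive semidefinite: `2 D_π P = D_π + S` with `S = D_π (2P - I)` symmetric, entrywise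
nonnegative and with row sums `π`, so `2 D_π P` is a signless Laplacian. Since
`D_π P^(t+2) = Pᵀ (D_π P^t) P`, every `D_π P^s` is positive semidefinite. Its quadratic form at
`1_Z - π(Z) · 1` equals `∑_{z,z' ∈ Z} π(z) P^s(z,z') - π(Z)²`, because `D_π P^s 1 = π`.
-/

open Finset Matrix

theorem le_div_self_of_sq_le {K : Type*} [Field K] [LinearOrder K] [IsStrictOrderedRing K]
    {a b : K} (ha : 0 ≤ a) (h : a ^ 2 ≤ b) : a ≤ b / a := by
  obtain rfl | ha := ha.eq_or_lt
  · simp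
  · rw [le_div_iff₀ ha]
    nlinarith

namespace Matrix

variable {Ω : Type*} [Fintype Ω]

theorem posSemidef_diagonal_sum_add [DecidableEq Ω] {S : Matrix Ω Ω ℝ} (hS : S.IsSymm)
    (hS0 : ∀ x y, 0 ≤ S x y) : (diagonal (fun x => ∑ y, S x y) + S).PosSemidef := by
  refine PosSemidef.of_dotProduct_mulVec_nonneg ?_ fun f => ?_
  · rw [IsHermitian, conjTranspose_eq_transpose_of_trivial]
    exact (isSymm_diagonal _).add hS
  have hswap : ∑ x, ∑ y, S x y * f y ^ 2 = ∑ x, ∑ y, S x y * f x ^ 2 := by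
    rw [Finset.sum_comm]
    exact Finset.sum_congr rfl fun x _ => Finset.sum_congr rfl fun y _ => by rw [hS.apply]
  have hform : star f ⬝ᵥ (diagonal (fun x => ∑ y, S x y) + S) *ᵥ f
      = ∑ x, ∑ y, S x y * f x ^ 2 + ∑ x, ∑ y, S x y * (f x * f y) := by
    rw [star_trivial, add_mulVec, dotProduct_add]
    simp only [dotProduct, mulVec_diagonal]
    simp only [mulVec, dotProduct, Finset.mul_sum, Finset.sum_mul]
    congr 1 <;> exact Finset.sum_congr rfl fun x _ => Finset.sum_congr rfl fun y _ => by ring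
  have hsq : ∑ x, ∑ y, S x y * (f x + f y) ^ 2
      = ∑ x, ∑ y, S x y * f x ^ 2 + 2 * ∑ x, ∑ y, S x y * (f x * f y)
        + ∑ x, ∑ y, S x y * f y ^ 2 := by
    simp only [Finset.mul_sum, ← Finset.sum_add_distrib]
    exact Finset.sum_congr rfl fun x _ => Finset.sum_congr rfl fun y _ => by ring
  have hpos : 0 ≤ ∑ x, ∑ y, S x y * (f x + f y) ^ 2 :=
    Finset.sum_nonneg fun x _ => Finset.sum_nonneg fun y _ => mul_nonneg (hS0 x y) (sq_nonneg _)
  linarith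

theorem isSymm_diagonal_mul_of_detailed_balance [DecidableEq Ω] {P : Matrix Ω Ω ℝ}
    {π : Ω → ℝ} (hrev : ∀ x y, π x * P x y = π y * P y x) : (diagonal π * P).IsSymm := by
  ext x y
  simp [diagonal_mul, hrev]

theorem posSemidef_diagonal_mul_of_lazy [DecidableEq Ω] {P : Matrix Ω Ω ℝ} {π : Ω → ℝ}
    (hπ : ∀ x, 0 ≤ π x) (hP : P ∈ rowStochastic ℝ Ω) (hrev : (diagonal π * P).IsSymm)
    (hlazy : ∀ x, (1 : ℝ) / 2 ≤ P x x) : (diagonal π * P).PosSemidef := by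
  set S : Matrix Ω Ω ℝ := (2 : ℝ) • (diagonal π * P) - diagonal π with hS_def
  have hS : S.IsSymm := (hrev.smul 2).sub (isSymm_diagonal π)
  have hS0 : ∀ x y, 0 ≤ S x y := by
    intro x y
    obtain rfl | h := eq_or_ne x y
    · simp only [hS_def, sub_apply, smul_apply, diagonal_mul, diagonal_apply_eq, smul_eq_mul]
      nlinarith [hπ x, hlazy x]
    · simp only [hS_def, sub_apply, smul_apply, diagonal_mul, diagonal_apply_ne _ h, smul_eq_mul,
        sub_zero]
      exact mul_nonneg zero_le_two (mul_nonneg (hπ x) (nonneg_of_mem_rowStochastic hP))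
  have hrow : (fun x => ∑ y, S x y) = π := by
    funext x
    simp only [hS_def, sub_apply, smul_apply, diagonal_mul, smul_eq_mul, diagonal_apply,
      sum_sub_distrib, ← mul_sum, sum_row_of_mem_rowStochastic hP, mul_one, sum_ite_eq, mem_univ,
      ↓reduceIte]
    ring
  have hhalf : diagonal π * P = (1 / 2 : ℝ) • (diagonal (fun x => ∑ y, S x y) + S) := by
    rw [hrow, hS_def]
    module
  rw [hhalf]
  exact (posSemidef_diagonal_sum_add hS hS0).smul (by norm_num)

theorem PosSemidef.mul_pow [DecidableEq Ω] {R : Type*} [CommRing R] [PartialOrder R]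
    [StarRing R] {D P : Matrix Ω Ω R} (hD : D.PosSemidef) (hDP : (D * P).PosSemidef) :
    ∀ t : ℕ, (D * P ^ t).PosSemidef
  | 0 => by simpa using hD
  | 1 => by simpa using hDP
  | t + 2 => by
    have hsymm : D * P = Pᴴ * D := by
      rw [← hDP.isHermitian.eq, conjTranspose_mul, hD.isHermitian.eq]
    have hconj : D * P ^ (t + 2) = Pᴴ * (D * P ^ t) * P := by
      rw [pow_succ, pow_succ', ← mul_assoc, ← mul_assoc, hsymm, mul_assoc Pᴴ D]
    rw [hconj]
    exact (hD.mul_pow hDP t).conjTranspose_mul_mul_same P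

theorem PosSemidef.sq_dotProduct_le {M : Matrix Ω Ω ℝ} (hM : M.PosSemidef) {π : Ω → ℝ}
    (hM1 : M *ᵥ 1 = π) (hπ : ∑ x, π x = 1) (g : Ω → ℝ) :
    (π ⬝ᵥ g) ^ 2 ≤ g ⬝ᵥ M *ᵥ g := by
  set m := π ⬝ᵥ g
  have hMT : Mᵀ = M := by
    rw [← conjTranspose_eq_transpose_of_trivial]
    exact hM.isHermitian.eq
  have hleft : 1 ⬝ᵥ M *ᵥ g = m := by rw [dotProduct_mulVec, ← hMT, vecMul_transpose, hM1]
  have hright : g ⬝ᵥ M *ᵥ 1 = m := by rw [hM1, dotProduct_comm]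
  have hone : (1 : Ω → ℝ) ⬝ᵥ M *ᵥ 1 = 1 := by rw [hM1, one_dotProduct, hπ]
  have h := hM.dotProduct_mulVec_nonneg (g - m • 1)
  simp only [star_trivial, mulVec_sub, mulVec_smul, dotProduct_sub, sub_dotProduct,
    dotProduct_smul, smul_dotProduct, hleft, hright, hone, smul_eq_mul] at h
  nlinarith

end Matrix

theorem stmt5_general {Ω : Type*} [Fintype Ω] [DecidableEq Ω]
    (P : Matrix Ω Ω ℝ) (π : Ω → ℝ)
    (hP0 : ∀ x y, 0 ≤ P x y) (hP1 : ∀ x, ∑ y, P x y = 1)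
    (hπ0 : ∀ x, 0 < π x) (hπ1 : ∑ x, π x = 1)
    (hrev : ∀ x y, π x * P x y = π y * P y x)
    (hlazy : ∀ x, (1 : ℝ) / 2 ≤ P x x)
    (Z : Finset Ω) (s : ℕ) :
    ∑ z ∈ Z, ∑ z' ∈ Z, (π z / ∑ w ∈ Z, π w) * (P ^ s) z z' ≥ ∑ w ∈ Z, π w := by
  have hP : P ∈ rowStochastic ℝ Ω := mem_rowStochastic_iff_sum.2 ⟨hP0, hP1⟩
  have hD : (diagonal π).PosSemidef := PosSemidef.diagonal fun x => (hπ0 x).le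
  have hM : (diagonal π * P ^ s).PosSemidef := hD.mul_pow
    (posSemidef_diagonal_mul_of_lazy (fun x => (hπ0 x).le) hP
      (isSymm_diagonal_mul_of_detailed_balance hrev) hlazy) s
  have hM1 : (diagonal π * P ^ s) *ᵥ 1 = π := by
    rw [← mulVec_mulVec, one_vecMul_of_mem_rowStochastic (pow_mem hP s)]
    ext x
    simp [mulVec_diagonal]
  set g : Ω → ℝ := fun x => if x ∈ Z then 1 else 0
  have hπg : π ⬝ᵥ g = ∑ w ∈ Z, π w := by simp [g, dotProduct, Finset.sum_ite_mem]
  have hgMg : g ⬝ᵥ (diagonal π * P ^ s) *ᵥ g = ∑ z ∈ Z, ∑ z' ∈ Z, π z * (P ^ s) z z' := by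
    simp [g, dotProduct, mulVec, diagonal_mul, Finset.sum_ite_mem]
  have key := hM.sq_dotProduct_le hM1 hπ1 g
  rw [hπg, hgMg] at key
  have hlhs : ∑ z ∈ Z, ∑ z' ∈ Z, (π z / ∑ w ∈ Z, π w) * (P ^ s) z z'
      = (∑ z ∈ Z, ∑ z' ∈ Z, π z * (P ^ s) z z') / ∑ w ∈ Z, π w := by
    simp only [Finset.sum_div, div_mul_eq_mul_div]
  rw [hlhs, ge_iff_le]
  exact le_div_self_of_sq_le (Finset.sum_nonneg fun w _ => (hπ0 w).le) key

/-- For a finite irreducible lazy reversible Markov chain and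
`Z ⊂ Ω`, for all `s ≥ 0`, `P_{π_Z}^s(Z) ≥ π(Z)`, where `π_Z` is `π` conditioned
on `Z`, i.e. `Σ_{z,z'∈Z} (π(z)/π(Z))·P^s(z,z') ≥ π(Z)`. -/
theorem stmt5 {Ω : Type*} [Fintype Ω] [Nonempty Ω] [DecidableEq Ω]
    (P : Matrix Ω Ω ℝ) (π : Ω → ℝ)
    (hP0 : ∀ x y, 0 ≤ P x y) (hP1 : ∀ x, ∑ y, P x y = 1)
    (hπ0 : ∀ x, 0 < π x) (hπ1 : ∑ x, π x = 1)
    (hrev : ∀ x y, π x * P x y = π y * P y x)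
    (hirr : ∀ x y, ∃ t : ℕ, 0 < (P ^ t) x y)
    (hlazy : ∀ x, (1 : ℝ) / 2 ≤ P x x)
    (Z : Finset Ω) (hZ : Z.Nonempty) (s : ℕ) :
    ∑ z ∈ Z, ∑ z' ∈ Z, (π z / ∑ w ∈ Z, π w) * (P ^ s) z z' ≥ ∑ w ∈ Z, π w :=
  stmt5_general P π hP0 hP1 hπ0 hπ1 hrev hlazy Z s
end

section
/- There exists an absolute constant c > 0 such that for any finite irreducible lazy Markov chain, t_mix(1/4) - t_mix(3/4) ≥ c·√(t_mix(3/4)). -/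
open Finset

/- ### Auxiliary combinatorial lemmas -/

lemma cb_sq (m : ℕ) : (2*m+1) * (Nat.centralBinom m)^2 ≤ 16^m := by
  induction m with
  | zero => simp [Nat.centralBinom]
  | succ m ih =>
    have key := Nat.succ_mul_centralBinom_succ m
    have hpos : 0 < (m+1)^2 := by positivity
    refine Nat.le_of_mul_le_mul_left ?_ hpos
    calc (m+1)^2 * ((2*(m+1)+1) * Nat.centralBinom (m+1)^2)
        = (2*m+3) * ((m+1) * Nat.centralBinom (m+1))^2 := by ring
      _ = (2*m+3) * (2 * (2*m+1) * Nat.centralBinom m)^2 := by rw [key]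
      _ = (4*(2*m+3)*(2*m+1)) * ((2*m+1) * Nat.centralBinom m ^2) := by ring
      _ ≤ (4*(2*m+3)*(2*m+1)) * 16^m := Nat.mul_le_mul_left _ ih
      _ ≤ ((m+1)^2 * 16) * 16^m := by
          apply Nat.mul_le_mul_right
          nlinarith
      _ = (m+1)^2 * 16^(m+1) := by ring

lemma choose_half_sq (t : ℕ) : (t+1) * (t.choose (t/2))^2 ≤ 4^t := by
  rcases Nat.even_or_odd t with ⟨m, hm⟩ | ⟨m, hm⟩
  · subst hm
    have h2 : m + m = 2 * m := by ring
    rw [h2]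
    have : (2*m)/2 = m := by omega
    rw [this]
    have := cb_sq m
    have h16 : (16:ℕ)^m = 4^(2*m) := by
      rw [pow_mul]; norm_num
    rw [Nat.centralBinom] at this
    omega
  · subst hm
    have hd : (2*m+1)/2 = m := by omega
    rw [hd]
    have hrel : Nat.centralBinom (m+1) = 2 * (2*m+1).choose m := by
      rw [Nat.centralBinom]
      have : 2*(m+1) = (2*m+1) + 1 := by ring
      rw [this, Nat.choose_succ_succ]
      have hsymm : (2*m+1).choose (m+1) = (2*m+1).choose m := by
        rw [← Nat.choose_symm (by omega : m+1 ≤ 2*m+1)]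
        congr 1
        omega
      rw [hsymm]
      ring
    have := cb_sq (m+1)
    rw [hrel] at this
    have h16 : (16:ℕ)^(m+1) = 4 * 4^(2*m+1) := by
      have : (16:ℕ)^(m+1) = 4^(2*(m+1)) := by rw [pow_mul]; norm_num
      rw [this, show 2*(m+1) = (2*m+1)+1 by ring, pow_succ]
      ring
    rw [h16] at this
    nlinarith [this]

lemma choose_succ_le_of_half_le {n k : ℕ} (h : n / 2 ≤ k) : n.choose (k+1) ≤ n.choose k := by
  rcases le_or_gt n k with hnk | hnk
  · simp [Nat.choose_eq_zero_of_lt (by omega : n < k+1)]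
  · by_cases hc : n - (k+1) < n / 2
    · have hmono := Nat.choose_le_succ_of_lt_half_left (n := n) (r := n - (k+1)) hc
      have e1 : n.choose (k+1) = n.choose (n - (k+1)) := (Nat.choose_symm (by omega)).symm
      have e2 : n.choose (n - (k+1) + 1) = n.choose k := by
        rw [show n - (k+1) + 1 = n - k by omega]
        exact Nat.choose_symm (by omega)
      rw [e1, ← e2]
      exact hmono
    · have hk : k + 1 = n - k := by omega
      rw [hk]
      exact (Nat.choose_symm (by omega)).le

lemma coeff_abs_sum (t : ℕ) :
    ∑ k ∈ Finset.range (t+2), |(((t+1).choose k : ℝ)) - 2 * (t.choose k)|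
      = 2 * t.choose (t/2) := by
  set m := t/2 with hm
  have hmt : m ≤ t := Nat.div_le_self t 2
  have hsplit : t + 2 = (m+1) + (t+1-m) := by omega
  rw [hsplit, Finset.sum_range_add]
  have part1 : ∑ k ∈ Finset.range (m+1), |(((t+1).choose k : ℝ)) - 2 * (t.choose k)|
      = t.choose m := by
    rw [Finset.sum_range_succ']
    have h0 : |(((t+1).choose 0 : ℝ)) - 2 * (t.choose 0)| = 1 := by
      norm_num
    rw [h0]
    have hterm : ∀ j ∈ Finset.range m,
        |(((t+1).choose (j+1) : ℝ)) - 2 * (t.choose (j+1))|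
          = (t.choose (j+1) : ℝ) - t.choose j := by
      intro j hj
      rw [Finset.mem_range] at hj
      have hpascal : (t+1).choose (j+1) = t.choose j + t.choose (j+1) :=
        Nat.choose_succ_succ t j
      have hinc : t.choose j ≤ t.choose (j+1) :=
        Nat.choose_le_succ_of_lt_half_left (by omega)
      rw [hpascal]
      push_cast
      rw [abs_of_nonpos (by nlinarith [(Nat.cast_le (α := ℝ)).2 hinc])]
      ring
    rw [Finset.sum_congr rfl hterm]
    have htel : ∑ j ∈ Finset.range m, ((t.choose (j+1) : ℝ) - t.choose j)
        = (t.choose m : ℝ) - t.choose 0 := Finset.sum_range_sub (fun j => (t.choose j : ℝ)) m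
    rw [htel]
    norm_num
  have part2 : ∑ j ∈ Finset.range (t+1-m),
      |(((t+1).choose (m+1+j) : ℝ)) - 2 * (t.choose (m+1+j))| = t.choose m := by
    have hterm : ∀ j ∈ Finset.range (t+1-m),
        |(((t+1).choose (m+1+j) : ℝ)) - 2 * (t.choose (m+1+j))|
          = (t.choose (m+j) : ℝ) - t.choose (m+j+1) := by
      intro j hj
      have hpascal : (t+1).choose (m+j+1) = t.choose (m+j) + t.choose (m+j+1) :=
        Nat.choose_succ_succ t (m+j)
      have heq : m+1+j = m+j+1 := by ring
      have hdec : t.choose (m+j+1) ≤ t.choose (m+j) :=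
        choose_succ_le_of_half_le (by omega)
      rw [heq, hpascal]
      push_cast
      rw [abs_of_nonneg (by nlinarith [(Nat.cast_le (α := ℝ)).2 hdec])]
      ring
    rw [Finset.sum_congr rfl hterm]
    have htel : ∑ j ∈ Finset.range (t+1-m),
        ((t.choose (m+j) : ℝ) - t.choose (m+(j+1)))
        = (t.choose (m+0) : ℝ) - t.choose (m+(t+1-m)) :=
      Finset.sum_range_sub' (fun j => (t.choose (m+j) : ℝ)) (t+1-m)
    have hz : t.choose (m+(t+1-m)) = 0 := by
      apply Nat.choose_eq_zero_of_lt
      omega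
    simp only [show ∀ j, m+(j+1) = m+j+1 from fun j => by ring] at htel
    rw [htel, hz]
    norm_num
  rw [part1, part2]
  ring

/- ### Matrix lemmas -/

section
variable {Ω : Type} [Fintype Ω] [DecidableEq Ω]

lemma stoch_pow {M : Matrix Ω Ω ℝ} (h0 : ∀ x y, 0 ≤ M x y) (h1 : ∀ x, ∑ y, M x y = 1) :
    ∀ t, (∀ x y, 0 ≤ (M^t) x y) ∧ (∀ x, ∑ y, (M^t) x y = 1) := by
  intro t
  induction t with
  | zero =>
    constructor
    · intro x y
      by_cases h : x = y <;> simp [pow_zero, Matrix.one_apply, h]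
    · intro x
      simp [pow_zero, Matrix.one_apply]
  | succ t ih =>
    constructor
    · intro x y
      rw [pow_succ, Matrix.mul_apply]
      exact Finset.sum_nonneg fun z _ => mul_nonneg (ih.1 x z) (h0 z y)
    · intro x
      simp only [pow_succ, Matrix.mul_apply]
      rw [Finset.sum_comm]
      calc ∑ z, ∑ y, (M^t) x z * M z y = ∑ z, (M^t) x z * ∑ y, M z y := by
            simp [Finset.mul_sum]
        _ = 1 := by
            simp only [h1, mul_one]
            exact ih.2 x

omit [DecidableEq Ω] in
lemma contraction {M : Matrix Ω Ω ℝ} (h1 : ∀ x, ∑ y, M x y = 1)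
    {δ : ℝ} (hδ : ∀ x y, δ ≤ M x y) (f : Ω → ℝ) (hf : ∑ x, f x = 0) :
    ∑ u, |∑ x, f x * M x u| ≤ (1 - (Fintype.card Ω) * δ) * ∑ x, |f x| := by
  have key : ∀ u, |∑ x, f x * M x u| ≤ ∑ x, |f x| * (M x u - δ) := by
    intro u
    have : ∑ x, f x * M x u = ∑ x, f x * (M x u - δ) := by
      simp only [mul_sub]
      rw [Finset.sum_sub_distrib, ← Finset.sum_mul, hf, zero_mul, sub_zero]
    rw [this]
    calc |∑ x, f x * (M x u - δ)| ≤ ∑ x, |f x * (M x u - δ)| := Finset.abs_sum_le_sum_abs _ _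
      _ = ∑ x, |f x| * (M x u - δ) := by
          apply Finset.sum_congr rfl
          intro x _
          rw [abs_mul, abs_of_nonneg (show (0:ℝ) ≤ M x u - δ by linarith [hδ x u])]
  calc ∑ u, |∑ x, f x * M x u| ≤ ∑ u, ∑ x, |f x| * (M x u - δ) :=
        Finset.sum_le_sum fun u _ => key u
    _ = ∑ x, |f x| * ((∑ u, M x u) - (Fintype.card Ω) * δ) := by
        rw [Finset.sum_comm]
        apply Finset.sum_congr rfl
        intro x _
        simp [Finset.mul_sum, mul_sub, Finset.sum_sub_distrib, Finset.card_univ]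
        ring
    _ = (1 - (Fintype.card Ω) * δ) * ∑ x, |f x| := by
        rw [Finset.sum_congr rfl (fun x _ => by rw [h1 x]), ← Finset.sum_mul]
        ring

lemma step_bound {M : Matrix Ω Ω ℝ} (h0 : ∀ x y, 0 ≤ M x y) (h1 : ∀ x, ∑ y, M x y = 1)
    (h2 : ∀ x, (1:ℝ)/2 ≤ M x x) (t : ℕ) (x : Ω) :
    ∑ u, |(M^(t+1)) x u - (M^t) x u| ≤ 1 / Real.sqrt (t+1) := by
  set Q : Matrix Ω Ω ℝ := (2:ℝ) • M - 1 with hQdef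
  have hQ0 : ∀ a b, 0 ≤ Q a b := by
    intro a b
    by_cases h : a = b
    · subst h
      simp only [hQdef, Matrix.sub_apply, Matrix.smul_apply, Matrix.one_apply_eq, smul_eq_mul]
      linarith [h2 a]
    · simp only [hQdef, Matrix.sub_apply, Matrix.smul_apply, Matrix.one_apply_ne h, smul_eq_mul]
      linarith [h0 a b]
  have hQ1 : ∀ a, ∑ b, Q a b = 1 := by
    intro a
    simp only [hQdef, Matrix.sub_apply, Matrix.smul_apply, smul_eq_mul]
    rw [Finset.sum_sub_distrib]
    rw [← Finset.mul_sum, h1 a]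
    simp [Matrix.one_apply]
    norm_num
  have hQpow := stoch_pow hQ0 hQ1
  have hM : M = (2:ℝ)⁻¹ • (Q + 1) := by
    rw [hQdef]
    ext a b
    simp
  have hexp : ∀ s : ℕ, M^s = ((2:ℝ)⁻¹)^s • ∑ k ∈ Finset.range (s+1), (s.choose k : ℝ) • Q^k := by
    intro s
    have hc : Commute Q (1 : Matrix Ω Ω ℝ) := Commute.one_right Q
    rw [hM, smul_pow, hc.add_pow s]
    congr 1
    apply Finset.sum_congr rfl
    intro k _
    rw [one_pow, mul_one]
    rw [← nsmul_eq_mul']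
    rw [← Nat.cast_smul_eq_nsmul ℝ]
  have hdiff : ∀ u, (M^(t+1)) x u - (M^t) x u
      = ((2:ℝ)⁻¹)^(t+1) * ∑ k ∈ Finset.range (t+2),
          ((((t+1).choose k : ℝ)) - 2 * (t.choose k)) * (Q^k) x u := by
    intro u
    rw [hexp (t+1), hexp t]
    simp only [Matrix.smul_apply, Matrix.sum_apply, smul_eq_mul]
    have hext : ∑ k ∈ Finset.range (t+1), (t.choose k : ℝ) * (Q^k) x u
        = ∑ k ∈ Finset.range (t+2), (t.choose k : ℝ) * (Q^k) x u := by
      rw [Finset.sum_range_succ (n := t+1)]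
      simp [Nat.choose_eq_zero_of_lt (by omega : t < t+1)]
    rw [hext]
    rw [Finset.mul_sum, Finset.mul_sum, Finset.mul_sum, ← Finset.sum_sub_distrib]
    apply Finset.sum_congr rfl
    intro k _
    have h2inv : ((2:ℝ)⁻¹)^t = ((2:ℝ)⁻¹)^(t+1) * 2 := by
      rw [pow_succ]
      ring
    rw [h2inv]
    ring
  calc ∑ u, |(M^(t+1)) x u - (M^t) x u|
      ≤ ∑ u, ((2:ℝ)⁻¹)^(t+1) * ∑ k ∈ Finset.range (t+2),
          |(((t+1).choose k : ℝ)) - 2 * (t.choose k)| * (Q^k) x u := by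
        apply Finset.sum_le_sum
        intro u _
        rw [hdiff u, abs_mul, abs_of_nonneg (by positivity : (0:ℝ) ≤ ((2:ℝ)⁻¹)^(t+1))]
        apply mul_le_mul_of_nonneg_left _ (by positivity)
        calc |∑ k ∈ Finset.range (t+2), ((((t+1).choose k : ℝ)) - 2 * (t.choose k)) * (Q^k) x u|
            ≤ ∑ k ∈ Finset.range (t+2), |((((t+1).choose k : ℝ)) - 2 * (t.choose k)) * (Q^k) x u| :=
              Finset.abs_sum_le_sum_abs _ _
          _ ≤ ∑ k ∈ Finset.range (t+2),
              |(((t+1).choose k : ℝ)) - 2 * (t.choose k)| * (Q^k) x u := by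
              apply Finset.sum_le_sum
              intro k _
              rw [abs_mul, abs_of_nonneg ((hQpow k).1 x u)]
    _ = ((2:ℝ)⁻¹)^(t+1) * ∑ k ∈ Finset.range (t+2),
          |(((t+1).choose k : ℝ)) - 2 * (t.choose k)| * ∑ u, (Q^k) x u := by
        rw [← Finset.mul_sum]
        congr 1
        rw [Finset.sum_comm]
        apply Finset.sum_congr rfl
        intro k _
        rw [Finset.mul_sum]
    _ = ((2:ℝ)⁻¹)^(t+1) * (2 * t.choose (t/2)) := by
        congr 1
        rw [← coeff_abs_sum t]
        apply Finset.sum_congr rfl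
        intro k _
        rw [(hQpow k).2 x, mul_one]
    _ ≤ 1 / Real.sqrt (t+1) := by
        have hsq : Real.sqrt (t+1) * (t.choose (t/2) : ℝ) ≤ 2^t := by
          have hn := choose_half_sq t
          have hr : ((t:ℝ)+1) * ((t.choose (t/2) : ℝ))^2 ≤ ((2:ℝ)^t)^2 := by
            have := (Nat.cast_le (α := ℝ)).2 hn
            push_cast at this
            calc ((t:ℝ)+1) * ((t.choose (t/2) : ℝ))^2 ≤ (4:ℝ)^t := this
              _ = ((2:ℝ)^t)^2 := by
                  rw [← pow_mul, mul_comm, pow_mul]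
                  norm_num
          have h1' : Real.sqrt (((t:ℝ)+1) * ((t.choose (t/2) : ℝ))^2)
              = Real.sqrt (t+1) * (t.choose (t/2) : ℝ) := by
            rw [Real.sqrt_mul (by positivity), Real.sqrt_sq (by positivity)]
          calc Real.sqrt (t+1) * (t.choose (t/2) : ℝ)
              = Real.sqrt (((t:ℝ)+1) * ((t.choose (t/2) : ℝ))^2) := h1'.symm
            _ ≤ Real.sqrt (((2:ℝ)^t)^2) := Real.sqrt_le_sqrt hr
            _ = (2:ℝ)^t := Real.sqrt_sq (by positivity)
        have hs2 : ((2:ℝ)⁻¹)^(t+1) * (2 * t.choose (t/2)) = (t.choose (t/2) : ℝ) / 2^t := by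
          rw [pow_succ]
          field_simp
          rw [one_div, inv_pow, mul_right_comm, inv_mul_cancel₀ (by positivity : (2:ℝ)^t ≠ 0), one_mul]
        rw [hs2, div_le_div_iff₀ (by positivity) (Real.sqrt_pos.2 (by positivity))]
        linarith [hsq]

lemma stationary_pow {M : Matrix Ω Ω ℝ} {π : Ω → ℝ}
    (hπ : ∀ u, ∑ z, π z * M z u = π u) :
    ∀ s u, ∑ z, π z * (M^s) z u = π u := by
  intro s
  induction s with
  | zero =>
    intro u
    simp [Matrix.one_apply]
  | succ s ih =>
    intro u
    simp only [pow_succ, Matrix.mul_apply]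
    calc ∑ z, π z * ∑ w, (M^s) z w * M w u
        = ∑ w, (∑ z, π z * (M^s) z w) * M w u := by
          simp only [Finset.mul_sum, Finset.sum_mul]
          rw [Finset.sum_comm]
          apply Finset.sum_congr rfl
          intro z _
          apply Finset.sum_congr rfl
          intro w _
          ring
      _ = π u := by
          rw [Finset.sum_congr rfl (fun w _ => by rw [ih w])]
          exact hπ u

lemma exists_pos_pow {M : Matrix Ω Ω ℝ} (h0 : ∀ x y, 0 ≤ M x y) (h1 : ∀ x, ∑ y, M x y = 1)
    (h2 : ∀ x, (1:ℝ)/2 ≤ M x x)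
    (hirr : ∀ x y, ∃ t : ℕ, 0 < (M ^ t) x y) :
    ∃ N : ℕ, ∀ x y, 0 < (M^N) x y := by
  have hstep : ∀ (t : ℕ) (x y : Ω), 0 < (M^t) x y → 0 < (M^(t+1)) x y := by
    intro t x y h
    rw [pow_succ, Matrix.mul_apply]
    have hterm : 0 < (M^t) x y * M y y := by
      apply mul_pos h
      linarith [h2 y]
    calc (0:ℝ) < (M^t) x y * M y y := hterm
      _ ≤ ∑ z, (M^t) x z * M z y := by
          apply Finset.single_le_sum (f := fun z => (M^t) x z * M z y)
          · intro z _
            exact mul_nonneg ((stoch_pow h0 h1 t).1 x z) (h0 z y)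
          · exact Finset.mem_univ y
  have hmono : ∀ (t t' : ℕ), t ≤ t' → ∀ x y, 0 < (M^t) x y → 0 < (M^t') x y := by
    intro t t' htt'
    induction t' with
    | zero =>
      intro x y h
      have : t = 0 := by omega
      subst this
      exact h
    | succ t' ih =>
      intro x y h
      rcases Nat.lt_or_ge t (t'+1) with hlt | hge
      · exact hstep t' x y (ih (by omega) x y h)
      · have : t = t' + 1 := by omega
        subst this
        exact h
  set T : Ω × Ω → ℕ := fun p => Classical.choose (hirr p.1 p.2) with hT
  refine ⟨Finset.sup Finset.univ T, fun x y => ?_⟩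
  apply hmono (T (x, y)) _ (Finset.le_sup (Finset.mem_univ (x,y)))
  exact Classical.choose_spec (hirr x y)

end

/- ### Convergence: eventually the chain is 1/4-mixed -/

section
variable {Ω : Type} [Fintype Ω] [Nonempty Ω] [DecidableEq Ω]

lemma exists_mix {M : Matrix Ω Ω ℝ} {π : Ω → ℝ}
    (h0 : ∀ x y, 0 ≤ M x y) (h1 : ∀ x, ∑ y, M x y = 1)
    (h2 : ∀ x, (1:ℝ)/2 ≤ M x x)
    (hπ0 : ∀ x, 0 ≤ π x) (hπ1 : ∑ x, π x = 1)
    (hπ : ∀ u, ∑ z, π z * M z u = π u)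
    (hirr : ∀ x y, ∃ t : ℕ, 0 < (M ^ t) x y) :
    ∃ m : ℕ, ∀ x, ∑ u, |(M^m) x u - π u| ≤ 1/2 := by
  obtain ⟨N, hN⟩ := exists_pos_pow h0 h1 h2 hirr
  obtain ⟨p₀, hp₀⟩ := Finite.exists_min (fun p : Ω × Ω => (M^N) p.1 p.2)
  set δ : ℝ := (M^N) p₀.1 p₀.2 with hδ
  have hδpos : 0 < δ := hN p₀.1 p₀.2
  have hδle : ∀ x y, δ ≤ (M^N) x y := fun x y => hp₀ (x, y)
  set q : ℝ := 1 - (Fintype.card Ω) * δ with hq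
  have hq1 : q < 1 := by
    have : (0:ℝ) < (Fintype.card Ω) * δ := by
      apply mul_pos _ hδpos
      exact_mod_cast Fintype.card_pos
    simp only [hq]
    linarith
  have hq0 : 0 ≤ q := by
    obtain ⟨x⟩ := ‹Nonempty Ω›
    have hsum : (Fintype.card Ω : ℝ) * δ ≤ ∑ y, (M^N) x y := by
      rw [← Finset.card_univ, ← nsmul_eq_mul, ← Finset.sum_const]
      exact Finset.sum_le_sum fun y _ => hδle x y
    rw [(stoch_pow h0 h1 N).2 x] at hsum
    simp only [hq]
    linarith
  have hMN0 := (stoch_pow h0 h1 N).1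
  have hMN1 := (stoch_pow h0 h1 N).2
  have hiter : ∀ (k : ℕ) (x : Ω), ∑ u, |(M^(N*k)) x u - π u| ≤ 2 * q^k := by
    intro k
    induction k with
    | zero =>
      intro x
      simp only [Nat.mul_zero, pow_zero, mul_one]
      calc ∑ u, |(M^0) x u - π u| ≤ ∑ u, (|(M^(0:ℕ)) x u| + |π u|) :=
            Finset.sum_le_sum fun u _ => abs_sub _ _
        _ = 2 := by
            rw [Finset.sum_add_distrib]
            have e1 : ∑ u, |(M^(0:ℕ)) x u| = 1 := by
              simp [Matrix.one_apply, apply_ite abs]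
            have e2 : ∑ u, |π u| = 1 := by
              rw [Finset.sum_congr rfl fun u _ => abs_of_nonneg (hπ0 u)]
              exact hπ1
            rw [e1, e2]
            norm_num
    | succ k ih =>
      intro x
      have hpow : M^(N*(k+1)) = M^(N*k) * M^N := by
        rw [← pow_add, show N*k+N = N*(k+1) by ring]
      set f : Ω → ℝ := fun z => (M^(N*k)) x z - π z with hf
      have hfsum : ∑ z, f z = 0 := by
        simp only [hf]
        rw [Finset.sum_sub_distrib, (stoch_pow h0 h1 (N*k)).2 x, hπ1]
        ring
      have hentry : ∀ u, (M^(N*(k+1))) x u - π u = ∑ z, f z * (M^N) z u := by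
        intro u
        simp only [hf, sub_mul]
        rw [Finset.sum_sub_distrib]
        rw [stationary_pow hπ N u, hpow, Matrix.mul_apply]
      calc ∑ u, |(M^(N*(k+1))) x u - π u| = ∑ u, |∑ z, f z * (M^N) z u| := by
            apply Finset.sum_congr rfl
            intro u _
            rw [hentry u]
        _ ≤ (1 - (Fintype.card Ω) * δ) * ∑ z, |f z| := contraction hMN1 hδle f hfsum
        _ ≤ q * (2 * q^k) := by
            apply mul_le_mul_of_nonneg_left (ih x) hq0
        _ = 2 * q^(k+1) := by ring
  obtain ⟨k, hk⟩ := exists_pow_lt_of_lt_one (show (0:ℝ) < 1/4 by norm_num) hq1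
  refine ⟨N*k, fun x => ?_⟩
  calc ∑ u, |(M^(N*k)) x u - π u| ≤ 2 * q^k := hiter k x
    _ ≤ 1/2 := by linarith

end

/- ### Main theorem -/

/-- There exists an absolute constant `c > 0` such that for every
finite irreducible lazy Markov chain (with stationary distribution `π`),
`t_mix(1/4) - t_mix(3/4) ≥ c·√(t_mix(3/4))`, where
`t_mix(ε) = inf{t : max_x ‖P^t(x,·) - π‖_TV ≤ ε}`. -/
theorem stmt10 :
    ∃ c : ℝ, 0 < c ∧
      ∀ (Ω : Type) [Fintype Ω] [Nonempty Ω] [DecidableEq Ω]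
        (P : Matrix Ω Ω ℝ) (π : Ω → ℝ),
        (∀ x y, 0 ≤ P x y) → (∀ x, ∑ y, P x y = 1) →
        (∀ x, 0 < π x) → (∑ x, π x = 1) →
        (∀ x, Matrix.vecMul π P x = π x) →
        (∀ x y, ∃ t : ℕ, 0 < (P ^ t) x y) →
        (∀ x, (1 : ℝ) / 2 ≤ P x x) →
        (↑(sInf {s : ℕ | (⨆ x, (1 / 2) * ∑ u, |(P ^ s) x u - π u|) ≤ 1 / 4}) -
          (↑(sInf {s : ℕ | (⨆ x, (1 / 2) * ∑ u, |(P ^ s) x u - π u|) ≤ 3 / 4}) : ℝ)) ≥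
          c * Real.sqrt
            (↑(sInf {s : ℕ | (⨆ x, (1 / 2) * ∑ u, |(P ^ s) x u - π u|) ≤ 3 / 4})) := by
  refine ⟨1/2, by norm_num, ?_⟩
  intro Ω _ _ _ P π h0 h1 hπ0 hπ1 hπP hirr hlazy
  have hπ : ∀ u, ∑ z, π z * P z u = π u := by
    intro u
    have := hπP u
    simpa [Matrix.vecMul, dotProduct] using this
  set g : ℕ → Ω → ℝ := fun s x => (1/2) * ∑ u, |(P ^ s) x u - π u| with hg
  have hbdd : ∀ s : ℕ, BddAbove (Set.range (g s)) :=
    fun s => Set.Finite.bddAbove (Set.finite_range _)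
  set D : ℕ → ℝ := fun s => ⨆ x, g s x with hD
  have hgoal : ∀ s : ℕ, (⨆ x, (1 / 2) * ∑ u, |(P ^ s) x u - π u|) = D s := fun s => rfl
  -- pointwise monotonicity
  have gmono : ∀ (t : ℕ) (x : Ω), g (t+1) x ≤ g t x := by
    intro t x
    simp only [hg]
    have hfsum : ∑ z, ((P^t) x z - π z) = 0 := by
      rw [Finset.sum_sub_distrib, (stoch_pow h0 h1 t).2 x, hπ1]
      ring
    have hentry : ∀ u, (P^(t+1)) x u - π u = ∑ z, ((P^t) x z - π z) * P z u := by
      intro u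
      simp only [sub_mul]
      rw [Finset.sum_sub_distrib, hπ u, pow_succ, Matrix.mul_apply]
    have hc := contraction h1 (fun x y => h0 x y) (fun z => (P^t) x z - π z) hfsum
    simp only [mul_zero, sub_zero, Nat.cast_zero, zero_mul] at hc
    have : ∑ u, |(P^(t+1)) x u - π u| ≤ ∑ z, |(P^t) x z - π z| := by
      calc ∑ u, |(P^(t+1)) x u - π u| = ∑ u, |∑ z, ((P^t) x z - π z) * P z u| := by
            apply Finset.sum_congr rfl
            intro u _
            rw [hentry u]
        _ ≤ (1 - (Fintype.card Ω) * 0) * ∑ z, |(P^t) x z - π z| :=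
            contraction h1 (fun a b => by linarith [h0 a b]) _ hfsum
        _ = ∑ z, |(P^t) x z - π z| := by ring
    linarith
  have Dmono : ∀ t : ℕ, D (t+1) ≤ D t := by
    intro t
    apply ciSup_le
    intro x
    exact le_trans (gmono t x) (le_ciSup (hbdd t) x)
  have Danti : Antitone D := antitone_nat_of_succ_le Dmono
  -- S₁ is nonempty
  have hS1ne : {s : ℕ | D s ≤ 1/4}.Nonempty := by
    obtain ⟨m, hm⟩ := exists_mix h0 h1 hlazy (fun x => (hπ0 x).le) hπ1 hπ hirr
    refine ⟨m, ?_⟩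
    show D m ≤ 1/4
    apply ciSup_le
    intro x
    simp only [hg]
    linarith [hm x]
  set t₁ := sInf {s : ℕ | D s ≤ 1/4} with ht₁
  set t₃ := sInf {s : ℕ | D s ≤ 3/4} with ht₃
  by_cases h3z : t₃ = 0
  · rw [h3z]
    simp
  · have h31 : 1 ≤ t₃ := by omega
    have hnot : ¬ D (t₃ - 1) ≤ 3/4 := by
      intro h
      have := Nat.sInf_le (show t₃ - 1 ∈ {s : ℕ | D s ≤ 3/4} from h)
      omega
    obtain ⟨x₀, hx₀⟩ := Finite.exists_max (g (t₃ - 1))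
    have h34 : 3/4 < g (t₃-1) x₀ := lt_of_lt_of_le (not_le.1 hnot) (ciSup_le hx₀)
    -- per-step drop for g
    have gstep : ∀ (t : ℕ) (x : Ω), g t x - (1/2) * (1 / Real.sqrt (t+1)) ≤ g (t+1) x := by
      intro t x
      simp only [hg]
      have htri : ∑ u, |(P^t) x u - π u|
          ≤ ∑ u, |(P^(t+1)) x u - π u| + ∑ u, |(P^(t+1)) x u - (P^t) x u| := by
        rw [← Finset.sum_add_distrib]
        apply Finset.sum_le_sum
        intro u _
        have : (P^t) x u - π u = ((P^(t+1)) x u - π u) - ((P^(t+1)) x u - (P^t) x u) := by ring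
        rw [this]
        exact abs_sub _ _
      have hsb := step_bound h0 h1 hlazy t x
      linarith
    have hsqrt_pos : (0:ℝ) < Real.sqrt t₃ := by
      apply Real.sqrt_pos.2
      exact_mod_cast h31
    -- iterated drop
    have hiter : ∀ s : ℕ, g (t₃-1) x₀ - s * ((1/2) / Real.sqrt t₃) ≤ g (t₃-1+s) x₀ := by
      intro s
      induction s with
      | zero => simp
      | succ s ih =>
        have hstep := gstep (t₃-1+s) x₀
        have hcast : ((t₃-1+s : ℕ) : ℝ) + 1 ≥ (t₃ : ℝ) := by
          have : (t₃:ℕ) ≤ t₃ - 1 + s + 1 := by omega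
          have := (Nat.cast_le (α := ℝ)).2 this
          push_cast at this ⊢
          linarith
        have hsq : Real.sqrt t₃ ≤ Real.sqrt (((t₃-1+s : ℕ) : ℝ) + 1) :=
          Real.sqrt_le_sqrt hcast
        have hsq2 : (0:ℝ) < Real.sqrt (((t₃-1+s : ℕ) : ℝ) + 1) := lt_of_lt_of_le hsqrt_pos hsq
        have hdrop : (1/2) * (1 / Real.sqrt (((t₃-1+s : ℕ) : ℝ) + 1)) ≤ (1/2) / Real.sqrt t₃ := by
          have hone : 1 / Real.sqrt (((t₃-1+s : ℕ) : ℝ) + 1) ≤ 1 / Real.sqrt t₃ :=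
            one_div_le_one_div_of_le hsqrt_pos hsq
          have h2' : (1/2:ℝ) / Real.sqrt t₃ = (1/2) * (1 / Real.sqrt t₃) := by ring
          rw [h2']
          linarith
        have heq : t₃ - 1 + (s+1) = (t₃ - 1 + s) + 1 := by omega
        rw [heq]
        push_cast
        nlinarith [hstep, ih, hdrop]
    set s₀ := Nat.sqrt t₃ with hs₀
    have hs₀1 : 1 ≤ s₀ := Nat.sqrt_pos.2 (by omega)
    have hs₀le : (s₀:ℝ) ≤ Real.sqrt t₃ := by
      rw [show (s₀:ℝ) = Real.sqrt ((s₀:ℝ)^2) from (Real.sqrt_sq (by positivity)).symm]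
      apply Real.sqrt_le_sqrt
      have h' : s₀ ^ 2 ≤ t₃ := Nat.sqrt_le' t₃
      have := (Nat.cast_le (α := ℝ)).2 h'
      push_cast at this
      nlinarith
    have hs₀ge : Real.sqrt (t₃:ℝ) < (s₀:ℝ) + 1 := by
      have h1' : t₃ < (s₀+1) ^ 2 := Nat.lt_succ_sqrt' t₃
      have h1'' : t₃ < (s₀+1) * (s₀+1) := by rw [← pow_two]; exact h1'
      have h2' := (Nat.cast_lt (α := ℝ)).2 h1''
      push_cast at h2'
      have := Real.sqrt_lt_sqrt (by positivity : (0:ℝ) ≤ (t₃:ℝ)) h2'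
      calc Real.sqrt (t₃:ℝ) < Real.sqrt (((s₀:ℝ)+1)*((s₀:ℝ)+1)) := this
        _ = (s₀:ℝ) + 1 := by
            rw [show ((s₀:ℝ)+1)*((s₀:ℝ)+1) = ((s₀:ℝ)+1)^2 by ring]
            exact Real.sqrt_sq (by positivity)
    -- D at time t₃-1+s₀ is still above 1/4
    have hkey : 1/4 < g (t₃-1+s₀) x₀ := by
      have := hiter s₀
      have hprod : (s₀:ℝ) * ((1/2) / Real.sqrt t₃) ≤ 1/2 := by
        calc (s₀:ℝ) * ((1/2) / Real.sqrt t₃) ≤ Real.sqrt t₃ * ((1/2) / Real.sqrt t₃) := by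
              apply mul_le_mul_of_nonneg_right hs₀le
              positivity
          _ = 1/2 := by
              field_simp
      linarith
    have hDkey : 1/4 < D (t₃-1+s₀) :=
      lt_of_lt_of_le hkey (le_ciSup (hbdd _) x₀)
    have hlb : ∀ a ∈ {s : ℕ | D s ≤ 1/4}, t₃ + s₀ ≤ a := by
      intro a ha
      by_contra hcon
      push_neg at hcon
      have hle : a ≤ t₃ - 1 + s₀ := by omega
      exact absurd (le_trans (Danti hle) ha) (not_le.2 hDkey)
    have ht₁ge : t₃ + s₀ ≤ t₁ := le_csInf hS1ne hlb
    -- final arithmetic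
    have hcast1 : ((t₃ + s₀ : ℕ) : ℝ) ≤ (t₁ : ℝ) := (Nat.cast_le (α := ℝ)).2 ht₁ge
    push_cast at hcast1
    have hs₀1' : (1:ℝ) ≤ (s₀:ℝ) := by exact_mod_cast hs₀1
    have : Real.sqrt (t₃:ℝ) ≤ 2 * (s₀:ℝ) := by linarith
    rw [ge_iff_le]
    calc (1/2 : ℝ) * Real.sqrt (t₃:ℝ) ≤ (s₀ : ℝ) := by linarith
      _ ≤ (t₁:ℝ) - (t₃:ℝ) := by linarith
end

section
/- For any finite lazy Markov chain, d(t) - d(t+s) ≤ ‖Bin(t,1/2) - Bin(t+s,1/2)‖_TV for all t, s ≥ 0, where d(t) = max_x ‖P^t(x,·) - π‖_TV and Bin(n,1/2) denotes the binomial distribution. -/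
open Finset

/-- For any finite lazy Markov chain, for all `t, s ≥ 0`:
`d(t) - d(t+s) ≤ ‖Bin(t,1/2) - Bin(t+s,1/2)‖_TV`,
where `d(t) = max_x ‖P^t(x,·) - π‖_TV` and `Bin(n,1/2)(k) = C(n,k)/2^n`. -/
theorem stmt11 {Ω : Type*} [Fintype Ω] [Nonempty Ω] [DecidableEq Ω]
    (P : Matrix Ω Ω ℝ) (π : Ω → ℝ)
    (hP0 : ∀ x y, 0 ≤ P x y) (hP1 : ∀ x, ∑ y, P x y = 1)
    (hπ0 : ∀ x, 0 < π x) (hπ1 : ∑ x, π x = 1)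
    (hπP : ∀ x, Matrix.vecMul π P x = π x)
    (hirr : ∀ x y, ∃ t : ℕ, 0 < (P ^ t) x y)
    (hlazy : ∀ x, (1 : ℝ) / 2 ≤ P x x)
    (t s : ℕ) :
    (⨆ x, (1 / 2) * ∑ u, |(P ^ t) x u - π u|) -
        (⨆ x, (1 / 2) * ∑ u, |(P ^ (t + s)) x u - π u|) ≤
      (1 / 2) * ∑' k : ℕ,
        |(t.choose k : ℝ) / 2 ^ t - ((t + s).choose k : ℝ) / 2 ^ (t + s)| := by
  classical
  set Q : Matrix Ω Ω ℝ := (2:ℝ) • P - 1 with hQdef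
  have hQ0 : ∀ x y, 0 ≤ Q x y := by
    intro x y
    by_cases h : x = y
    · subst h
      simp only [hQdef, Matrix.sub_apply, Matrix.smul_apply, Matrix.one_apply_eq, smul_eq_mul]
      linarith [hlazy x]
    · simp only [hQdef, Matrix.sub_apply, Matrix.smul_apply, Matrix.one_apply_ne h,
        smul_eq_mul, sub_zero]
      linarith [hP0 x y]
  have hQ1 : ∀ x, ∑ y, Q x y = 1 := by
    intro x
    simp only [hQdef, Matrix.sub_apply, Matrix.smul_apply, smul_eq_mul,
      Finset.sum_sub_distrib, ← Finset.mul_sum, hP1 x, Matrix.one_apply]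
    simp
    norm_num
  have hQk : ∀ k : ℕ, (∀ x y, 0 ≤ (Q ^ k) x y) ∧ (∀ x, ∑ y, (Q ^ k) x y = 1) := by
    intro k
    induction k with
    | zero =>
      constructor
      · intro x y
        rw [pow_zero, Matrix.one_apply]
        split <;> norm_num
      · intro x; rw [pow_zero]; simp [Matrix.one_apply]
    | succ k ih =>
      constructor
      · intro x y
        rw [pow_succ, Matrix.mul_apply]
        exact Finset.sum_nonneg fun z _ => mul_nonneg (ih.1 x z) (hQ0 z y)
      · intro x
        rw [pow_succ]
        simp only [Matrix.mul_apply]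
        rw [Finset.sum_comm]
        calc ∑ z, ∑ y, (Q ^ k) x z * Q z y
            = ∑ z, (Q ^ k) x z * ∑ y, Q z y := by
              refine Finset.sum_congr rfl fun z _ => ?_
              rw [Finset.mul_sum]
          _ = ∑ z, (Q ^ k) x z := by
              refine Finset.sum_congr rfl fun z _ => ?_
              rw [hQ1 z, mul_one]
          _ = 1 := ih.2 x
  have hPQ : P = (2:ℝ)⁻¹ • (1 + Q) := by
    rw [hQdef]
    ext x y
    simp only [Matrix.smul_apply, Matrix.add_apply, Matrix.sub_apply, smul_eq_mul]
    ring
  have hexpand : ∀ n : ℕ, (P ^ n) = ∑ k ∈ Finset.range (n+1),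
      ((n.choose k : ℝ)/2^n) • Q ^ k := by
    intro n
    rw [hPQ, smul_pow, add_comm, (Commute.one_right Q).add_pow, Finset.smul_sum]
    refine Finset.sum_congr rfl fun k hk => ?_
    rw [one_pow, mul_one, ← (Nat.cast_commute (n.choose k) (Q ^ k)).eq,
      ← nsmul_eq_mul, ← Nat.cast_smul_eq_nsmul ℝ, smul_smul]
    congr 1
    rw [inv_pow, div_eq_mul_inv, mul_comm]
  have hentry : ∀ (n : ℕ) x u, (P ^ n) x u =
      ∑ k ∈ Finset.range (n+1), ((n.choose k : ℝ)/2^n) * (Q ^ k) x u := by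
    intro n x u
    rw [hexpand n]
    simp [Matrix.sum_apply, Matrix.smul_apply]
  have hentry' : ∀ x u, (P ^ t) x u =
      ∑ k ∈ Finset.range (t+s+1), ((t.choose k : ℝ)/2^t) * (Q ^ k) x u := by
    intro x u
    rw [hentry t x u]
    apply Finset.sum_subset
    · intro k hk
      simp only [Finset.mem_range] at hk ⊢
      omega
    · intro k _ hk
      simp only [Finset.mem_range, not_lt] at hk
      rw [Nat.choose_eq_zero_of_lt (by omega)]
      simp
  set C : ℝ := ∑ k ∈ Finset.range (t+s+1),
    |(t.choose k : ℝ)/2^t - ((t+s).choose k : ℝ)/2^(t+s)| with hC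
  have key : ∀ x, (1/2 : ℝ) * ∑ u, |(P ^ t) x u - π u| ≤
      (1/2) * ∑ u, |(P ^ (t+s)) x u - π u| + (1/2) * C := by
    intro x
    rw [← mul_add]
    refine mul_le_mul_of_nonneg_left ?_ (by norm_num)
    have h1 : ∑ u, |(P ^ t) x u - π u| ≤
        ∑ u, (|(P ^ (t+s)) x u - π u| + |(P ^ t) x u - (P ^ (t+s)) x u|) := by
      refine Finset.sum_le_sum fun u _ => ?_
      have := abs_sub_le ((P ^ t) x u) ((P ^ (t+s)) x u) (π u)
      linarith [this]
    rw [Finset.sum_add_distrib] at h1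
    refine h1.trans (add_le_add_right ?_ _)
    calc ∑ u, |(P ^ t) x u - (P ^ (t+s)) x u|
        = ∑ u, |∑ k ∈ Finset.range (t+s+1),
            ((t.choose k : ℝ)/2^t - ((t+s).choose k : ℝ)/2^(t+s)) * (Q ^ k) x u| := by
          refine Finset.sum_congr rfl fun u _ => ?_
          rw [hentry' x u, hentry (t+s) x u, ← Finset.sum_sub_distrib]
          congr 1
          refine Finset.sum_congr rfl fun k _ => ?_
          ring
      _ ≤ ∑ u, ∑ k ∈ Finset.range (t+s+1),
            |(t.choose k : ℝ)/2^t - ((t+s).choose k : ℝ)/2^(t+s)| * (Q ^ k) x u := by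
          refine Finset.sum_le_sum fun u _ => ?_
          refine (Finset.abs_sum_le_sum_abs _ _).trans ?_
          refine Finset.sum_le_sum fun k _ => ?_
          rw [abs_mul, abs_of_nonneg ((hQk k).1 x u)]
      _ = ∑ k ∈ Finset.range (t+s+1),
            |(t.choose k : ℝ)/2^t - ((t+s).choose k : ℝ)/2^(t+s)| * ∑ u, (Q ^ k) x u := by
          rw [Finset.sum_comm]
          refine Finset.sum_congr rfl fun k _ => ?_
          rw [Finset.mul_sum]
      _ = C := by
          rw [hC]
          refine Finset.sum_congr rfl fun k _ => ?_
          rw [(hQk k).2 x, mul_one]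
  have htsum : (∑' k : ℕ,
      |(t.choose k : ℝ) / 2 ^ t - ((t + s).choose k : ℝ) / 2 ^ (t + s)|) = C := by
    rw [hC]
    apply tsum_eq_sum
    intro k hk
    simp only [Finset.mem_range, not_lt] at hk
    rw [Nat.choose_eq_zero_of_lt (by omega), Nat.choose_eq_zero_of_lt (by omega)]
    simp
  rw [htsum, sub_le_iff_le_add]
  refine ciSup_le fun x => ?_
  have hb : (1/2 : ℝ) * ∑ u, |(P ^ (t+s)) x u - π u| ≤
      ⨆ x, (1/2 : ℝ) * ∑ u, |(P ^ (t+s)) x u - π u| :=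
    le_ciSup (f := fun x => (1/2 : ℝ) * ∑ u, |(P ^ (t+s)) x u - π u|)
      (Set.Finite.bddAbove (Set.finite_range _)) x
  linarith [key x]
end

section
/- Let X be a lazy random walk on ℤ with holding probability 1/2 and one-step transitions p(x, x+1) = 1/3, p(x, x-1) = 1/6, and let T'₁ be the first hitting time of 1 starting from 0. Then for λ ≤ log(6/(3+2√2)), the Laplace transform φ(λ) := E[e^{λT'₁}] is finite and satisfies φ(λ) = e^λ(1/3 + φ(λ)²/6 + φ(λ)/2), whence φ(λ) = (6e^{-λ} - 3)/2 - √((6e^{-λ}-3)² - 8)/2. -/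
/-!
Let `A = ∑ₜ P₀[T'₁ = t] Xᵗ`. From `1 - k` the walk reaches `1` through `k` successive independent
upward unit crossings, so `P_{1-k}[T'₁ = t]` is the `t`-th coefficient of `A ^ k`; together with the
first-step decomposition this gives `A = X (1/3 + A/2 + A²/6)`, both proved by one induction on `t`.
Rescaling `X ↦ e^λ X` turns `φ(λ)` into the coefficient sum of `A(e^λ X)`. For
`e^λ ≤ 6/(3 + 2√2)` the map `s ↦ e^λ (1/3 + s/2 + s²/6)` sends `[0, √2]` into itself, which bounds
the partial sums by `√2`; the Cauchy product then turns the identity into the quadratic equation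
for `φ`, and `φ ≤ √2` selects its smaller root.
-/

/-- `hitOne t x = P_x[T'₁ = t]` for the lazy walk on `ℤ` with holding probability
`1/2`, `p(x,x+1) = 1/3`, `p(x,x-1) = 1/6`, where `T'₁` is the first hitting time
of `1`. -/
noncomputable def hitOne : ℕ → ℤ → ℝ
  | 0, x => if x = 1 then 1 else 0
  | (t + 1), x =>
      if x = 1 then 0
      else (1 / 2) * hitOne t x + (1 / 3) * hitOne t (x + 1) + (1 / 6) * hitOne t (x - 1)

open Finset PowerSeries

namespace PowerSeries

variable {R : Type*}

theorem coeff_mul_eq_of_trunc_eq [CommSemiring R] {F G : R⟦X⟧} {n : ℕ}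
    (h : trunc (n + 1) F = trunc (n + 1) G) (H : R⟦X⟧) :
    coeff n (F * H) = coeff n (G * H) := by
  rw [coeff_mul_eq_coeff_trunc_mul_trunc _ _ n.lt_succ_self, h,
    ← coeff_mul_eq_coeff_trunc_mul_trunc _ _ n.lt_succ_self]

theorem hasSum_coeff_X_mul_iff [Ring R] [TopologicalSpace R] [IsTopologicalAddGroup R]
    {F : R⟦X⟧} {a : R} :
    HasSum (fun n => coeff n (X * F)) a ↔ HasSum (fun n => coeff n F) a := by
  rw [← hasSum_nat_add_iff' 1]
  simp [coeff_succ_X_mul]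

theorem hasSum_coeff_mul [NormedRing R] [CompleteSpace R] {F G : R⟦X⟧}
    (hF : Summable fun n => ‖coeff n F‖) (hG : Summable fun n => ‖coeff n G‖) :
    HasSum (fun n => coeff n (F * G)) ((∑' n, coeff n F) * ∑' n, coeff n G) := by
  simp only [coeff_mul]
  rw [tsum_mul_tsum_eq_tsum_sum_antidiagonal_of_summable_norm hF hG]
  exact (summable_norm_sum_mul_antidiagonal_of_summable_norm hF hG).of_norm.hasSum

theorem sum_range_coeff_mul_le [CommSemiring R] [PartialOrder R] [IsOrderedRing R]
    {F G : R⟦X⟧} (hF : ∀ n, 0 ≤ coeff n F) (hG : ∀ n, 0 ≤ coeff n G) (N : ℕ) :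
    ∑ n ∈ range N, coeff n (F * G) ≤
      (∑ n ∈ range N, coeff n F) * ∑ n ∈ range N, coeff n G := by
  simp only [coeff_mul, Nat.sum_antidiagonal_eq_sum_range_succ_mk]
  rw [sum_range_diag_flip N fun i j => coeff i F * coeff j G, sum_mul]
  refine sum_le_sum fun i _ => ?_
  rw [← mul_sum]
  exact mul_le_mul_of_nonneg_left
    (sum_le_sum_of_subset_of_nonneg (range_subset_range.2 (N.sub_le i)) fun j _ _ => hG j) (hF i)

theorem rescale_C [CommSemiring R] (a c : R) : rescale a (C c) = C c := by
  ext (_ | n) <;> simp [coeff_C]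

section QuadraticEquation

variable {B : ℝ⟦X⟧} {p q r : ℝ}

theorem sum_range_coeff_le_of_eq_X_mul (hB : B = X * (C p + C q * B + C r * B ^ 2))
    (hB₀ : ∀ n, 0 ≤ coeff n B) (hp : 0 ≤ p) (hq : 0 ≤ q) (hr : 0 ≤ r) {s : ℝ} (hs : 0 ≤ s)
    (hfix : p + q * s + r * s ^ 2 ≤ s) (N : ℕ) : ∑ n ∈ range N, coeff n B ≤ s := by
  induction N with
  | zero => simpa using hs
  | succ N ih =>
    have hconst : ∑ n ∈ range N, coeff n (C p) ≤ p := by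
      cases N <;> simp [coeff_C, hp]
    have hsq : ∑ n ∈ range N, coeff n (B ^ 2) ≤ s ^ 2 := by
      rw [sq, sq]
      exact (sum_range_coeff_mul_le hB₀ hB₀ N).trans
        (mul_self_le_mul_self (sum_nonneg fun n _ => hB₀ n) ih)
    calc ∑ n ∈ range (N + 1), coeff n B
        = ∑ n ∈ range N, coeff n (C p) + q * ∑ n ∈ range N, coeff n B +
            r * ∑ n ∈ range N, coeff n (B ^ 2) := by
          conv_lhs => rw [hB]
          simp [sum_range_succ', coeff_succ_X_mul, sum_add_distrib, mul_sum]
      _ ≤ p + q * s + r * s ^ 2 := by gcongr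
      _ ≤ s := hfix

theorem tsum_coeff_eq_of_eq_X_mul (hB : B = X * (C p + C q * B + C r * B ^ 2))
    (hB₀ : ∀ n, 0 ≤ coeff n B) (hsum : Summable fun n => coeff n B) :
    ∑' n, coeff n B = p + q * ∑' n, coeff n B + r * (∑' n, coeff n B) ^ 2 := by
  have hnorm : Summable fun n => ‖coeff n B‖ := by
    simpa only [Real.norm_of_nonneg (hB₀ _)] using hsum
  have hQ : HasSum (fun n => coeff n (C p + C q * B + C r * B ^ 2))
      (p + q * ∑' n, coeff n B + r * (∑' n, coeff n B) ^ 2) := by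
    convert ((hasSum_ite_eq 0 p).add (hsum.hasSum.mul_left q)).add
      ((hasSum_coeff_mul hnorm hnorm).mul_left r) using 1
    · ext n; simp [coeff_C, sq]
    · ring
  rw [← hasSum_coeff_X_mul_iff, ← hB] at hQ
  exact hQ.tsum_eq

end QuadraticEquation

end PowerSeries

theorem hitOne_nonneg (t : ℕ) (x : ℤ) : 0 ≤ hitOne t x := by
  induction t generalizing x with
  | zero => unfold hitOne; positivity
  | succ t ih =>
    have := ih x; have := ih (x + 1); have := ih (x - 1)
    unfold hitOne; positivity

theorem hitOne_succ_of_ne_one {x : ℤ} (hx : x ≠ 1) (t : ℕ) :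
    hitOne (t + 1) x = 1 / 2 * hitOne t x + 1 / 3 * hitOne t (x + 1) + 1 / 6 * hitOne t (x - 1) :=
  if_neg hx

noncomputable def hitSeries : ℝ⟦X⟧ := mk fun t => hitOne t 0

theorem hitOne_one (t : ℕ) : hitOne t 1 = if t = 0 then 1 else 0 := by
  cases t <;> simp [hitOne]

theorem coeff_succ_hitSeries {t : ℕ} (h : hitOne t (-1) = coeff t (hitSeries ^ 2)) :
    coeff (t + 1) hitSeries =
      coeff (t + 1) (X * (C (1 / 3) + C (1 / 2) * hitSeries + C (1 / 6) * hitSeries ^ 2)) := by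
  rw [coeff_succ_X_mul, map_add, map_add, coeff_C_mul, coeff_C_mul, ← h, coeff_C]
  simp only [hitSeries, coeff_mk, hitOne_succ_of_ne_one zero_ne_one, zero_add, zero_sub, hitOne_one]
  split_ifs <;> ring

theorem hitOne_one_sub_eq_coeff_pow (t k : ℕ) : hitOne t (1 - k) = coeff t (hitSeries ^ k) := by
  induction t using Nat.strong_induction_on generalizing k with
  | _ t ih =>
  set Q : ℝ⟦X⟧ := C (1 / 3) + C (1 / 2) * hitSeries + C (1 / 6) * hitSeries ^ 2
  rcases t with _ | t
  · rcases k with _ | k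
    · simp [hitOne]
    · simp [hitOne, coeff_zero_eq_constantCoeff, hitSeries, show -(k : ℤ) ≠ 1 by omega]
  rcases k with _ | k
  · simp [hitOne, coeff_one]
  have htrunc : trunc (t + 2) hitSeries = trunc (t + 2) (X * Q) := by
    ext (_ | u)
    · simp [coeff_trunc, hitSeries, hitOne]
    · simp only [coeff_trunc]
      split_ifs with hu
      swap; · rfl
      exact coeff_succ_hitSeries (by simpa using ih u (by omega) 2)
  calc hitOne (t + 1) (1 - (k + 1 : ℕ))
      = 1 / 3 * hitOne t (1 - k) + 1 / 2 * hitOne t (1 - (k + 1 : ℕ)) +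
          1 / 6 * hitOne t (1 - (k + 2 : ℕ)) := by
        rw [hitOne_succ_of_ne_one (by omega)]
        push_cast; ring_nf
    _ = coeff t (Q * hitSeries ^ k) := by
        rw [ih t t.lt_succ_self, ih t t.lt_succ_self, ih t t.lt_succ_self]
        simp only [Q, add_mul, mul_assoc, ← pow_succ', ← pow_add, map_add, coeff_C_mul]
        ring_nf
    _ = coeff (t + 1) (hitSeries ^ (k + 1)) := by
        rw [pow_succ', coeff_mul_eq_of_trunc_eq htrunc, mul_assoc, coeff_succ_X_mul]

theorem hitSeries_eq :
    hitSeries = X * (C (1 / 3) + C (1 / 2) * hitSeries + C (1 / 6) * hitSeries ^ 2) := by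
  ext (_ | t)
  · simp [hitSeries, hitOne]
  · exact coeff_succ_hitSeries (by simpa using hitOne_one_sub_eq_coeff_pow t 2)

theorem eq_sub_sqrt_of_sq_sub_mul_add_eq_zero {x b c : ℝ} (h : x ^ 2 - b * x + c = 0)
    (hx : 2 * x ≤ b) : x = b / 2 - √(b ^ 2 - 4 * c) / 2 := by
  have hdisc : b ^ 2 - 4 * c = (b - 2 * x) ^ 2 := by linear_combination (-4) * h
  rw [hdisc, Real.sqrt_sq (by linarith)]
  ring

/-- For the lazy walk on `ℤ` with `p(x,x+1)=1/3`, `p(x,x-1)=1/6`,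
holding probability `1/2`, and `T'₁` the first hitting time of `1` from `0`:
for `λ ≤ log(6/(3+2√2))`, the Laplace transform `φ(λ) = E[e^{λT'₁}]` is finite and
satisfies `φ(λ) = e^λ(1/3 + φ(λ)²/6 + φ(λ)/2)`, whence
`φ(λ) = (6e^{-λ}-3)/2 - √((6e^{-λ}-3)² - 8)/2`. -/
theorem stmt15 (lam : ℝ) (hlam : lam ≤ Real.log (6 / (3 + 2 * Real.sqrt 2))) :
    Summable (fun t : ℕ => hitOne t 0 * Real.exp (lam * t)) ∧
    (∑' t : ℕ, hitOne t 0 * Real.exp (lam * t)) =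
      Real.exp lam * (1 / 3 + (∑' t : ℕ, hitOne t 0 * Real.exp (lam * t)) ^ 2 / 6 +
        (∑' t : ℕ, hitOne t 0 * Real.exp (lam * t)) / 2) ∧
    (∑' t : ℕ, hitOne t 0 * Real.exp (lam * t)) =
      (6 * Real.exp (-lam) - 3) / 2 -
        Real.sqrt ((6 * Real.exp (-lam) - 3) ^ 2 - 8) / 2 := by
  have hz : Real.exp lam * (3 + 2 * √2) ≤ 6 := by
    rw [← le_div_iff₀ (by positivity), ← Real.exp_log (by positivity : 0 < 6 / (3 + 2 * √2))]
    exact Real.exp_le_exp.2 hlam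
  set B := rescale (Real.exp lam) hitSeries
  have hcoeff : (fun t : ℕ => hitOne t 0 * Real.exp (lam * t)) = fun t => coeff t B := by
    ext t
    rw [coeff_rescale, hitSeries, coeff_mk, mul_comm lam, Real.exp_nat_mul, mul_comm]
  have hB : B = X * (C (Real.exp lam * (1 / 3)) + C (Real.exp lam * (1 / 2)) * B +
      C (Real.exp lam * (1 / 6)) * B ^ 2) := by
    have h := congrArg (rescale (Real.exp lam)) hitSeries_eq
    simp only [map_mul, map_add, map_pow, rescale_X, rescale_C] at h
    exact h.trans (by simp only [map_mul]; ring)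
  have hB₀ (t : ℕ) : 0 ≤ coeff t B := by
    rw [← congrFun hcoeff]
    exact mul_nonneg (hitOne_nonneg t 0) (Real.exp_nonneg _)
  have hfix : Real.exp lam * (1 / 3) + Real.exp lam * (1 / 2) * √2 +
      Real.exp lam * (1 / 6) * √2 ^ 2 ≤ √2 := by
    have := Real.sq_sqrt (zero_le_two (α := ℝ))
    nlinarith [Real.sqrt_nonneg 2]
  have hsum_le := sum_range_coeff_le_of_eq_X_mul hB hB₀ (by positivity) (by positivity)
    (by positivity) (Real.sqrt_nonneg 2) hfix
  have hsum : Summable fun t => coeff t B := summable_of_sum_range_le hB₀ hsum_le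
  have hφ := tsum_coeff_eq_of_eq_X_mul hB hB₀ hsum
  have hφ_le : ∑' t, coeff t B ≤ √2 := Real.tsum_le_of_sum_range_le hB₀ hsum_le
  have hinv : Real.exp (-lam) * Real.exp lam = 1 := by
    rw [← Real.exp_add, neg_add_cancel, Real.exp_zero]
  rw [hcoeff]
  refine ⟨hsum, by linear_combination hφ, ?_⟩
  rw [show (8 : ℝ) = 4 * 2 by norm_num]
  refine eq_sub_sqrt_of_sq_sub_mul_add_eq_zero ?_ ?_
  · linear_combination (-6 * Real.exp (-lam)) * hφ -
      (2 + (∑' t, coeff t B) ^ 2 + 3 * ∑' t, coeff t B) * hinv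
  · nlinarith [Real.exp_pos lam]
end

section
/- Let λ₂ be the second largest eigenvalue of a reversible irreducible transition matrix P on a finite state space with stationary measure π, and let Φ := min_{A : 0 < π(A) ≤ 1/2} Q(A)/π(A), where Q(A) := Σ_{x∈A, y∉A} π(x)P(x,y). Then Φ²/2 ≤ 1 - λ₂ ≤ 2Φ. -/
open Finset
set_option maxHeartbeats 1000000

open Finset

lemma cheeger_variational {Ω : Type*} [Fintype Ω] [DecidableEq Ω]
    (P : Matrix Ω Ω ℝ) (π : Ω → ℝ)
    (hπ0 : ∀ x, 0 < π x)
    (hrev : ∀ x y, π x * P x y = π y * P y x)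
    (hP1 : ∀ x, ∑ y, P x y = 1)
    (lam2 : ℝ)
    (hlam2 : IsGreatest {r : ℝ | ∃ f : Ω → ℝ, f ≠ 0 ∧ (∑ v, π v * f v) = 0 ∧
      P.mulVec f = r • f} lam2) :
    ∀ f : Ω → ℝ, (∑ v, π v * f v) = 0 →
      ∑ x, ∑ y, π x * P x y * f x * f y ≤ lam2 * ∑ x, π x * f x ^ 2 := by
  classical
  set w : EuclideanSpace ℝ Ω := WithLp.toLp 2 (fun x => Real.sqrt (π x)) with hw_def
  have hw0 : ∀ x, 0 < w x := fun x => Real.sqrt_pos.2 (hπ0 x)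
  have hww : ∀ x, w x * w x = π x := fun x => Real.mul_self_sqrt (hπ0 x).le
  set S : Matrix Ω Ω ℝ := fun x y => w x * P x y * (w y)⁻¹ with hS_def
  have hSalt : ∀ x y, S x y = (π x * P x y) / (w x * w y) := by
    intro x y
    show w x * P x y * (w y)⁻¹ = _
    rw [← hww x]
    field_simp [(hw0 x).ne', (hw0 y).ne']
  have hSsymm : ∀ x y, S x y = S y x := by
    intro x y
    rw [hSalt, hSalt, hrev x y, mul_comm (w x) (w y)]
  -- column sums: ∑ x, S x y * w x = w y
  have hcol : ∀ y, ∑ x, S x y * w x = w y := by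
    intro y
    have h1 : ∀ x, S x y * w x = (w y)⁻¹ * (π y * P y x) := by
      intro x
      rw [hSalt, ← hrev y x]
      field_simp [(hw0 x).ne', (hw0 y).ne']
    rw [Finset.sum_congr rfl fun x _ => h1 x, ← Finset.mul_sum, ← Finset.mul_sum,
      hP1 y, mul_one, ← hww y]
    field_simp
  -- the linear map on EuclideanSpace
  set Slin : EuclideanSpace ℝ Ω →ₗ[ℝ] EuclideanSpace ℝ Ω := Matrix.toEuclideanLin S with hSlin_def
  have hSlin_apply : ∀ (g : EuclideanSpace ℝ Ω) (x : Ω), Slin g x = ∑ y, S x y * g y := by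
    intro g x
    simp [hSlin_def, Matrix.toEuclideanLin_apply, Matrix.mulVec, dotProduct]
  have hinner : ∀ (a b : EuclideanSpace ℝ Ω), (inner ℝ a b : ℝ) = ∑ x, a x * b x := by
    intro a b
    simp [PiLp.inner_apply, RCLike.inner_apply, mul_comm]
  -- correspondence between f and g = w * f
  have key : ∀ g : EuclideanSpace ℝ Ω, (inner ℝ w g : ℝ) = 0 →
      (inner ℝ (Slin g) g : ℝ) ≤ lam2 * (inner ℝ g g : ℝ) := by
    -- symmetry of Slin
    have hSlinSymm : ∀ a b : EuclideanSpace ℝ Ω, (inner ℝ (Slin a) b : ℝ) = inner ℝ a (Slin b) := by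
      intro a b
      rw [hinner, hinner]
      simp_rw [hSlin_apply, Finset.sum_mul, Finset.mul_sum]
      rw [Finset.sum_comm]
      apply Finset.sum_congr rfl; intro x _
      apply Finset.sum_congr rfl; intro y _
      rw [hSsymm x y]; ring
    set V : Submodule ℝ (EuclideanSpace ℝ Ω) := (ℝ ∙ w)ᗮ with hV_def
    have hVmem : ∀ g : EuclideanSpace ℝ Ω, g ∈ V ↔ (inner ℝ w g : ℝ) = 0 := fun g =>
      Submodule.mem_orthogonal_singleton_iff_inner_right
    have hVinv : ∀ g ∈ V, Slin g ∈ V := by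
      intro g hg
      rw [hVmem] at hg ⊢
      have : (inner ℝ w (Slin g) : ℝ) = ∑ y, (∑ x, S x y * w x) * g y := by
        rw [hinner]
        simp_rw [hSlin_apply, Finset.mul_sum, Finset.sum_mul]
        rw [Finset.sum_comm]
        apply Finset.sum_congr rfl; intro x _
        apply Finset.sum_congr rfl; intro y _
        ring
      rw [this]
      simp_rw [hcol]
      rw [← hinner w g]
      exact hg
    set T : V →ₗ[ℝ] V := Slin.restrict hVinv with hT_def
    have hTcoe : ∀ v : V, (T v : EuclideanSpace ℝ Ω) = Slin v := fun v => rfl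
    have hTsymm : T.IsSymmetric := by
      intro a b
      rw [Submodule.coe_inner, Submodule.coe_inner, hTcoe, hTcoe]
      exact hSlinSymm a b
    -- nontrivial V via the eigenvector of lam2
    obtain ⟨f₂, hf₂0, hf₂mean, hf₂eig⟩ := hlam2.1
    set g₂ : EuclideanSpace ℝ Ω := WithLp.toLp 2 (fun x => w x * f₂ x) with hg₂_def
    have hg₂mem : g₂ ∈ V := by
      rw [hVmem, hinner, ← hf₂mean]
      apply Finset.sum_congr rfl
      intro x _
      show w x * (w x * f₂ x) = π x * f₂ x
      rw [← mul_assoc, hww]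
    have hg₂ne : g₂ ≠ 0 := by
      intro h
      apply hf₂0
      funext x
      have := congrArg (fun u : EuclideanSpace ℝ Ω => u x) h
      simp only [hg₂_def] at this
      have hwx := (hw0 x).ne'
      show f₂ x = 0
      by_contra hfx
      exact (mul_ne_zero hwx hfx) this
    have : Nontrivial V := nontrivial_of_ne ⟨g₂, hg₂mem⟩ 0 (by
      simp only [ne_eq, Submodule.mk_eq_zero]
      exact hg₂ne)
    -- eigenvector equation for g₂
    have hg₂eig : Slin g₂ = lam2 • g₂ := by
      ext x
      rw [hSlin_apply]
      have h1 : ∀ y, S x y * g₂ y = w x * (P x y * f₂ y) := by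
        intro y
        show S x y * (w y * f₂ y) = _
        rw [hSalt, ← hww x]
        field_simp [(hw0 x).ne', (hw0 y).ne']
      rw [Finset.sum_congr rfl fun y _ => h1 y, ← Finset.mul_sum]
      have h2 : ∑ y, P x y * f₂ y = lam2 * f₂ x := by
        have := congrFun hf₂eig x
        simpa [Matrix.mulVec, dotProduct] using this
      rw [h2]
      show w x * (lam2 * f₂ x) = lam2 * g₂ x
      show w x * (lam2 * f₂ x) = lam2 * (w x * f₂ x)
      ring
    -- bounded above Rayleigh quotients
    set Tc := LinearMap.toContinuousLinearMap T with hTc_def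
    have hB : BddAbove (Set.range fun x : {x : V // x ≠ 0} =>
        RCLike.re (inner ℝ (T x) (x : V) : ℝ) / ‖(x : V)‖ ^ 2) := by
      refine ⟨‖Tc‖, ?_⟩
      rintro r ⟨x, rfl⟩
      have hx0 : (0:ℝ) < ‖(x : V)‖ := norm_pos_iff.2 x.2
      have h1 : (inner ℝ (T x) (x : V) : ℝ) ≤ ‖T (x : V)‖ * ‖(x : V)‖ :=
        real_inner_le_norm _ _
      have h2 : ‖T (x : V)‖ ≤ ‖Tc‖ * ‖(x : V)‖ := by
        have := Tc.le_opNorm (x : V)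
        simpa [hTc_def] using this
      have h3 : (inner ℝ (T x) (x : V) : ℝ) ≤ ‖Tc‖ * ‖(x : V)‖ ^ 2 := by
        nlinarith
      simp only [RCLike.re_to_real]
      rw [div_le_iff₀ (by positivity)]
      exact h3
    set μ : ℝ := ⨆ x : {x : V // x ≠ 0}, RCLike.re (inner ℝ (T x) (x : V) : ℝ) / ‖(x : V)‖ ^ 2
      with hμ_def
    have heig := hTsymm.hasEigenvalue_iSup_of_finiteDimensional
    -- μ ≤ lam2
    have hμlam : μ ≤ lam2 := by
      obtain ⟨v, hveig⟩ := heig.exists_hasEigenvector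
      have hvne := hveig.right
      have hveq : Slin (v : EuclideanSpace ℝ Ω) = μ • (v : EuclideanSpace ℝ Ω) := by
        have := hveig.apply_eq_smul
        calc Slin (v : EuclideanSpace ℝ Ω) = ((T v : V) : EuclideanSpace ℝ Ω) := (hTcoe v).symm
          _ = ((μ • v : V) : EuclideanSpace ℝ Ω) := by
              rw [this]
              rfl
          _ = μ • (v : EuclideanSpace ℝ Ω) := rfl
      apply hlam2.2
      refine ⟨fun x => (w x)⁻¹ * (v : EuclideanSpace ℝ Ω) x, ?_, ?_, ?_⟩
      · intro h
        apply hvne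
        have : (v : EuclideanSpace ℝ Ω) = 0 := by
          ext x
          have := congrFun h x
          simp only at this
          have hwx := (hw0 x).ne'
          show (v : EuclideanSpace ℝ Ω) x = 0
          by_contra hvx
          exact (mul_ne_zero (inv_ne_zero hwx) hvx) this
        exact Subtype.ext this
      · have hvV : (v : EuclideanSpace ℝ Ω) ∈ V := v.2
        rw [hVmem, hinner] at hvV
        rw [← hvV]
        apply Finset.sum_congr rfl
        intro x _
        have hwx := (hw0 x).ne'
        show π x * ((w x)⁻¹ * (v : EuclideanSpace ℝ Ω) x) = w x * (v : EuclideanSpace ℝ Ω) x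
        rw [← hww x]
        field_simp
      · funext x
        show (P.mulVec fun x => (w x)⁻¹ * (v : EuclideanSpace ℝ Ω) x) x
          = μ * ((w x)⁻¹ * (v : EuclideanSpace ℝ Ω) x)
        have hveqx := congrArg (fun u : EuclideanSpace ℝ Ω => u x) hveq
        rw [hSlin_apply] at hveqx
        simp only [Matrix.mulVec, dotProduct]
        have h1 : ∀ y, P x y * ((w y)⁻¹ * (v : EuclideanSpace ℝ Ω) y)
            = (w x)⁻¹ * (S x y * (v : EuclideanSpace ℝ Ω) y) := by
          intro y
          rw [hSalt]
          rw [← hww x]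
          field_simp [(hw0 x).ne', (hw0 y).ne']
        rw [Finset.sum_congr rfl fun y _ => h1 y, ← Finset.mul_sum, hveqx]
        show (w x)⁻¹ * (μ • (v : EuclideanSpace ℝ Ω)) x = _
        show (w x)⁻¹ * (μ * (v : EuclideanSpace ℝ Ω) x) = _
        ring
    -- conclude
    intro g hg
    by_cases hgz : g = 0
    · simp [hgz]
    · have hgV : g ∈ V := (hVmem g).2 hg
      have hne : (⟨g, hgV⟩ : V) ≠ 0 := fun h => hgz (congrArg Subtype.val h)
      have hray : RCLike.re (inner ℝ (T ⟨g, hgV⟩) ((⟨g, hgV⟩ : V)) : ℝ) / ‖(⟨g, hgV⟩ : V)‖ ^ 2 ≤ μ :=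
        le_ciSup hB (⟨⟨g, hgV⟩, hne⟩ : {x : V // x ≠ 0})
      have hnorm : ‖(⟨g, hgV⟩ : V)‖ = ‖g‖ := rfl
      have hinn : (inner ℝ (T ⟨g, hgV⟩) ((⟨g, hgV⟩ : V)) : ℝ) = inner ℝ (Slin g) g := by
        rw [Submodule.coe_inner, hTcoe]
      have hgn : (0:ℝ) < ‖g‖ ^ 2 := pow_pos (norm_pos_iff.2 hgz) 2
      rw [RCLike.re_to_real, hinn, hnorm, div_le_iff₀ hgn] at hray
      have : (inner ℝ g g : ℝ) = ‖g‖ ^ 2 := real_inner_self_eq_norm_sq g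
      rw [this]
      calc (inner ℝ (Slin g) g : ℝ) ≤ μ * ‖g‖ ^ 2 := hray
        _ ≤ lam2 * ‖g‖ ^ 2 := by nlinarith
  intro f hf
  set g : EuclideanSpace ℝ Ω := WithLp.toLp 2 (fun x => w x * f x) with hg_def
  have hwg : (inner ℝ w g : ℝ) = 0 := by
    rw [hinner]
    rw [← hf]
    apply Finset.sum_congr rfl
    intro x _
    show w x * (w x * f x) = π x * f x
    rw [← mul_assoc, hww]
  have h1 : (inner ℝ (Slin g) g : ℝ) = ∑ x, ∑ y, π x * P x y * f x * f y := by
    rw [hinner]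
    apply Finset.sum_congr rfl
    intro x _
    rw [hSlin_apply, Finset.sum_mul]
    apply Finset.sum_congr rfl
    intro y _
    show S x y * (w y * f y) * (w x * f x) = _
    rw [hSalt]
    have := hww x; have := hww y
    field_simp [(hw0 x).ne', (hw0 y).ne']
  have h2 : (inner ℝ g g : ℝ) = ∑ x, π x * f x ^ 2 := by
    rw [hinner]
    apply Finset.sum_congr rfl
    intro x _
    show (w x * f x) * (w x * f x) = π x * f x ^ 2
    rw [← hww x]; ring
  rw [← h1, ← h2]
  exact key g hwg

section Ident
variable {Ω : Type*} [Fintype Ω] [DecidableEq Ω]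
  (P : Matrix Ω Ω ℝ) (π : Ω → ℝ)

lemma rowsum_id (hP1 : ∀ x, ∑ y, P x y = 1) (u : Ω → ℝ) :
    ∑ x, ∑ y, π x * P x y * u x = ∑ x, π x * u x := by
  apply Finset.sum_congr rfl
  intro x _
  calc ∑ y, π x * P x y * u x = (π x * u x) * ∑ y, P x y := by
        rw [Finset.mul_sum]; apply Finset.sum_congr rfl; intros; ring
    _ = π x * u x := by rw [hP1]; ring

lemma colsum_id (hP1 : ∀ x, ∑ y, P x y = 1)
    (hrev : ∀ x y, π x * P x y = π y * P y x) (u : Ω → ℝ) :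
    ∑ x, ∑ y, π x * P x y * u y = ∑ x, π x * u x := by
  rw [Finset.sum_comm]
  apply Finset.sum_congr rfl
  intro y _
  calc ∑ x, π x * P x y * u y = (π y * u y) * ∑ x, P y x := by
        rw [Finset.mul_sum]
        apply Finset.sum_congr rfl
        intro x _
        rw [hrev x y]; ring
    _ = π y * u y := by rw [hP1]; ring

lemma dirichlet_id (hP1 : ∀ x, ∑ y, P x y = 1)
    (hrev : ∀ x y, π x * P x y = π y * P y x) (f : Ω → ℝ) :
    ∑ x, ∑ y, π x * P x y * (f x - f y) ^ 2
      = 2 * ((∑ x, π x * f x ^ 2) - ∑ x, ∑ y, π x * P x y * f x * f y) := by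
  have expand : ∀ x y, π x * P x y * (f x - f y) ^ 2
      = π x * P x y * (f x ^ 2) + π x * P x y * (f y ^ 2)
        - 2 * (π x * P x y * f x * f y) := by intros; ring
  calc ∑ x, ∑ y, π x * P x y * (f x - f y) ^ 2
      = ∑ x, ∑ y, (π x * P x y * (f x ^ 2) + π x * P x y * (f y ^ 2)
          - 2 * (π x * P x y * f x * f y)) := by
        apply Finset.sum_congr rfl; intro x _
        apply Finset.sum_congr rfl; intro y _
        exact expand x y
    _ = (∑ x, ∑ y, π x * P x y * (f x ^ 2)) + (∑ x, ∑ y, π x * P x y * (f y ^ 2))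
          - 2 * ∑ x, ∑ y, π x * P x y * f x * f y := by
        simp [Finset.sum_add_distrib, Finset.sum_sub_distrib, Finset.mul_sum]
    _ = _ := by
        rw [rowsum_id P π hP1 (fun x => f x ^ 2), colsum_id P π hP1 hrev (fun x => f x ^ 2)]
        ring

lemma cut_id (hrev : ∀ x y, π x * P x y = π y * P y x) (B : Finset Ω) :
    ∑ x, ∑ y, π x * P x y *
        ((if x ∈ B then (1:ℝ) else 0) - (if y ∈ B then (1:ℝ) else 0)) ^ 2
      = 2 * ∑ x ∈ B, ∑ y ∈ Bᶜ, π x * P x y := by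
  set e : Ω → ℝ := fun x => if x ∈ B then (1:ℝ) else 0 with he_def
  have step1 : ∀ x y, π x * P x y * (e x - e y) ^ 2
      = π x * P x y * (e x * (1 - e y)) + π x * P x y * (e y * (1 - e x)) := by
    intro x y
    by_cases hx : x ∈ B <;> by_cases hy : y ∈ B <;> simp [he_def, hx, hy] <;> ring
  have half : ∀ (w : Matrix Ω Ω ℝ), (∑ x, ∑ y, w x y * (e x * (1 - e y)))
      = ∑ x ∈ B, ∑ y ∈ Bᶜ, w x y := by
    intro w
    rw [← Finset.sum_add_sum_compl B (fun x => ∑ y, w x y * (e x * (1 - e y)))]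
    have h1 : ∀ x ∈ B, (∑ y, w x y * (e x * (1 - e y))) = ∑ y ∈ Bᶜ, w x y := by
      intro x hx
      rw [← Finset.sum_add_sum_compl B (fun y => w x y * (e x * (1 - e y)))]
      have h2 : ∀ y ∈ B, w x y * (e x * (1 - e y)) = 0 := by
        intro y hy; simp [he_def, hy]
      have h3 : ∀ y ∈ Bᶜ, w x y * (e x * (1 - e y)) = w x y := by
        intro y hy
        rw [Finset.mem_compl] at hy
        simp [he_def, hy, hx]
      rw [Finset.sum_congr rfl h2, Finset.sum_congr rfl h3]
      simp
    have h4 : ∀ x ∈ Bᶜ, (∑ y, w x y * (e x * (1 - e y))) = 0 := by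
      intro x hx
      rw [Finset.mem_compl] at hx
      apply Finset.sum_eq_zero
      intro y _
      simp [he_def, hx]
    rw [Finset.sum_congr rfl h1, Finset.sum_congr rfl h4]
    simp
  calc ∑ x, ∑ y, π x * P x y * (e x - e y) ^ 2
      = (∑ x, ∑ y, (π x * P x y) * (e x * (1 - e y)))
        + ∑ x, ∑ y, (π x * P x y) * (e y * (1 - e x)) := by
        simp_rw [step1, Finset.sum_add_distrib]
    _ = (∑ x, ∑ y, (π x * P x y) * (e x * (1 - e y)))
        + ∑ x, ∑ y, (π x * P x y) * (e x * (1 - e y)) := by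
        congr 1
        rw [Finset.sum_comm]
        apply Finset.sum_congr rfl; intro x _
        apply Finset.sum_congr rfl; intro y _
        rw [hrev y x]
    _ = 2 * ∑ x ∈ B, ∑ y ∈ Bᶜ, π x * P x y := by
        rw [half (fun x y => π x * P x y)]
        ring

end Ident

lemma coarea_id {Ω : Type*} [Fintype Ω] [Nonempty Ω] [DecidableEq Ω]
    (P : Matrix Ω Ω ℝ) (π : Ω → ℝ)
    (hP0 : ∀ x y, 0 ≤ P x y) (hπ0 : ∀ x, 0 < π x)
    (hrev : ∀ x y, π x * P x y = π y * P y x)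
    (Φ : ℝ) :
    ∀ (h : Ω → ℝ), (∀ x, 0 ≤ h x) →
      (∀ t : ℝ, 0 ≤ t → (Finset.univ.filter (fun x => t < h x)).Nonempty →
        Φ * (∑ x ∈ Finset.univ.filter (fun x => t < h x), π x)
          ≤ ∑ x ∈ Finset.univ.filter (fun x => t < h x),
              ∑ y ∈ (Finset.univ.filter (fun x => t < h x))ᶜ, π x * P x y) →
      2 * (Φ * ∑ x, π x * h x) ≤ ∑ x, ∑ y, π x * P x y * |h x - h y| := by
  classical
  suffices H : ∀ n : ℕ, ∀ (h : Ω → ℝ), (Finset.image h Finset.univ).card ≤ n →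
      (∀ x, 0 ≤ h x) →
      (∀ t : ℝ, 0 ≤ t → (Finset.univ.filter (fun x => t < h x)).Nonempty →
        Φ * (∑ x ∈ Finset.univ.filter (fun x => t < h x), π x)
          ≤ ∑ x ∈ Finset.univ.filter (fun x => t < h x),
              ∑ y ∈ (Finset.univ.filter (fun x => t < h x))ᶜ, π x * P x y) →
      2 * (Φ * ∑ x, π x * h x) ≤ ∑ x, ∑ y, π x * P x y * |h x - h y| by
    intro h hh0 hlev
    exact H (Finset.image h Finset.univ).card h le_rfl hh0 hlev
  intro n
  induction n with
  | zero =>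
    intro h hcard _ _
    exfalso
    have : (Finset.image h Finset.univ).Nonempty :=
      ⟨h (Classical.arbitrary Ω), Finset.mem_image_of_mem h (Finset.mem_univ _)⟩
    have := Finset.card_pos.2 this
    omega
  | succ n IH =>
    intro h hcard hh0 hlev
    -- maximum value of h
    have himg : (Finset.image h Finset.univ).Nonempty :=
      ⟨h (Classical.arbitrary Ω), Finset.mem_image_of_mem h (Finset.mem_univ _)⟩
    set m : ℝ := (Finset.image h Finset.univ).max' himg with hm_def
    obtain ⟨x₀, _, hx₀⟩ := Finset.mem_image.1 ((Finset.image h Finset.univ).max'_mem himg)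
    have hle_m : ∀ x, h x ≤ m :=
      fun x => Finset.le_max' _ _ (Finset.mem_image_of_mem h (Finset.mem_univ x))
    by_cases hm0 : m ≤ 0
    · -- h is identically 0
      have hz : ∀ x, h x = 0 := fun x => le_antisymm ((hle_m x).trans hm0) (hh0 x)
      have : ∀ x : Ω, π x * h x = 0 := fun x => by rw [hz]; ring
      rw [Finset.sum_congr rfl fun x _ => this x]
      have : ∀ x y : Ω, π x * P x y * |h x - h y| = 0 := fun x y => by
        rw [hz, hz]; simp
      calc 2 * (Φ * ∑ _x : Ω, (0:ℝ)) = 0 := by simp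
        _ ≤ ∑ x, ∑ y, π x * P x y * |h x - h y| := by
          apply Finset.sum_nonneg; intro x _
          apply Finset.sum_nonneg; intro y _
          exact mul_nonneg (mul_nonneg (hπ0 x).le (hP0 x y)) (abs_nonneg _)
    · push_neg at hm0
      set S' : Finset ℝ := (Finset.image h Finset.univ).filter (fun v => v < m) with hS'_def
      by_cases hS' : S'.Nonempty
      · -- main case: second largest value m'
        set m' : ℝ := S'.max' hS' with hm'_def
        have hm'S : m' ∈ S' := S'.max'_mem hS'
        have hm'img : m' ∈ Finset.image h Finset.univ := (Finset.mem_filter.1 hm'S).1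
        have hm'm : m' < m := (Finset.mem_filter.1 hm'S).2
        have hm'0 : 0 ≤ m' := by
          obtain ⟨z, _, hz⟩ := Finset.mem_image.1 hm'img
          rw [← hz]; exact hh0 z
        have hgap : ∀ x, m' < h x → h x = m := by
          intro x hx
          by_contra hne
          have h1 : h x < m := lt_of_le_of_ne (hle_m x) hne
          have h2 : h x ∈ S' := Finset.mem_filter.2
            ⟨Finset.mem_image_of_mem h (Finset.mem_univ x), h1⟩
          exact absurd (Finset.le_max' S' _ h2) (not_le.2 hx)
        set B : Finset Ω := Finset.univ.filter (fun x => m' < h x) with hB_def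
        have hBmem : ∀ x, x ∈ B ↔ m' < h x := by
          intro x; simp [hB_def]
        have hBm : ∀ x ∈ B, h x = m := fun x hx => hgap x ((hBmem x).1 hx)
        have hBc : ∀ x, x ∉ B → h x ≤ m' := by
          intro x hx
          exact not_lt.1 (fun hlt => hx ((hBmem x).2 hlt))
        have hBne : B.Nonempty := ⟨x₀, (hBmem x₀).2 (by rw [hx₀]; exact hm'm)⟩
        set h' : Ω → ℝ := fun x => min (h x) m' with hh'_def
        have hh'0 : ∀ x, 0 ≤ h' x := fun x => le_min (hh0 x) hm'0
        have h'B : ∀ x ∈ B, h' x = m' := by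
          intro x hx
          exact min_eq_right (by rw [hBm x hx]; exact hm'm.le)
        have h'Bc : ∀ x, x ∉ B → h' x = h x := fun x hx => min_eq_left (hBc x hx)
        have h'le : ∀ x, h' x ≤ m' := fun x => min_le_right _ _
        set e : Ω → ℝ := fun x => if x ∈ B then (1:ℝ) else 0 with he_def
        have hpt : ∀ x, h x = h' x + (m - m') * e x := by
          intro x
          by_cases hx : x ∈ B
          · rw [hBm x hx, h'B x hx]; simp [he_def, hx]
          · rw [h'Bc x hx]; simp [he_def, hx]
        have habs : ∀ x y, |h x - h y| = |h' x - h' y| + (m - m') * (e x - e y) ^ 2 := by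
          intro x y
          by_cases hx : x ∈ B <;> by_cases hy : y ∈ B
          · rw [hBm x hx, hBm y hy, h'B x hx, h'B y hy]; simp [he_def, hx, hy]
          · have h1 : h y ≤ m' := hBc y hy
            rw [hBm x hx, h'B x hx, h'Bc y hy]
            simp only [he_def, if_pos hx, if_neg hy]
            rw [abs_of_nonneg (by linarith), abs_of_nonneg (by linarith)]
            ring
          · have h1 : h x ≤ m' := hBc x hx
            rw [hBm y hy, h'B y hy, h'Bc x hx]
            simp only [he_def, if_pos hy, if_neg hx]
            rw [abs_of_nonpos (by linarith), abs_of_nonpos (by linarith)]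
            ring
          · rw [h'Bc x hx, h'Bc y hy]
            simp [he_def, hx, hy]
        have hesum : ∑ x, π x * e x = ∑ x ∈ B, π x := by
          have hterm : ∀ x : Ω, π x * e x = if x ∈ B then π x else 0 := by
            intro x
            simp only [he_def, mul_ite, mul_one, mul_zero]
          rw [Finset.sum_congr rfl fun x _ => hterm x, Finset.sum_ite_mem,
            Finset.univ_inter]
        have sum1 : ∑ x, π x * h x = (∑ x, π x * h' x) + (m - m') * ∑ x ∈ B, π x := by
          calc ∑ x, π x * h x = ∑ x, (π x * h' x + (m - m') * (π x * e x)) := by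
                apply Finset.sum_congr rfl
                intro x _
                rw [hpt x]; ring
            _ = (∑ x, π x * h' x) + (m - m') * ∑ x, π x * e x := by
                rw [Finset.sum_add_distrib, ← Finset.mul_sum]
            _ = _ := by rw [hesum]
        have sum2 : ∑ x, ∑ y, π x * P x y * |h x - h y|
            = (∑ x, ∑ y, π x * P x y * |h' x - h' y|)
              + (m - m') * (2 * ∑ x ∈ B, ∑ y ∈ Bᶜ, π x * P x y) := by
          calc ∑ x, ∑ y, π x * P x y * |h x - h y|
              = ∑ x, ∑ y, (π x * P x y * |h' x - h' y|
                + (m - m') * (π x * P x y * (e x - e y) ^ 2)) := by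
                apply Finset.sum_congr rfl; intro x _
                apply Finset.sum_congr rfl; intro y _
                rw [habs x y]; ring
            _ = (∑ x, ∑ y, π x * P x y * |h' x - h' y|)
                + (m - m') * ∑ x, ∑ y, π x * P x y * (e x - e y) ^ 2 := by
                simp_rw [Finset.sum_add_distrib]
                rw [Finset.mul_sum]
                congr 1
                apply Finset.sum_congr rfl; intro x _
                rw [Finset.mul_sum]
            _ = _ := by rw [he_def, cut_id P π hrev B]
        -- level sets of h'
        have hlev' : ∀ t : ℝ, 0 ≤ t → (Finset.univ.filter (fun x => t < h' x)).Nonempty →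
            Φ * (∑ x ∈ Finset.univ.filter (fun x => t < h' x), π x)
              ≤ ∑ x ∈ Finset.univ.filter (fun x => t < h' x),
                  ∑ y ∈ (Finset.univ.filter (fun x => t < h' x))ᶜ, π x * P x y := by
          intro t ht hne
          rcases lt_or_ge t m' with htm | htm
          · have hfe : Finset.univ.filter (fun x => t < h' x)
                = Finset.univ.filter (fun x => t < h x) := by
              ext x
              simp only [Finset.mem_filter, Finset.mem_univ, true_and, hh'_def, lt_min_iff]
              exact ⟨fun ⟨a, _⟩ => a, fun a => ⟨a, htm⟩⟩
            rw [hfe]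
            rw [hfe] at hne
            exact hlev t ht hne
          · exfalso
            obtain ⟨x, hx⟩ := hne
            simp only [Finset.mem_filter] at hx
            exact absurd (le_trans (h'le x) htm) (not_le.2 hx.2)
        -- card decreases
        have hcard' : (Finset.image h' Finset.univ).card ≤ n := by
          have hsub : Finset.image h' Finset.univ ⊆ (Finset.image h Finset.univ).erase m := by
            intro v hv
            obtain ⟨x, _, hx⟩ := Finset.mem_image.1 hv
            by_cases hxB : x ∈ B
            · rw [← hx, h'B x hxB]
              exact Finset.mem_erase.2 ⟨ne_of_lt hm'm, hm'img⟩
            · rw [← hx, h'Bc x hxB]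
              refine Finset.mem_erase.2 ⟨?_, Finset.mem_image_of_mem h (Finset.mem_univ x)⟩
              exact ne_of_lt (lt_of_le_of_lt (hBc x hxB) hm'm)
          have hm_img : m ∈ Finset.image h Finset.univ := by
            rw [hm_def, ← hx₀]; exact Finset.mem_image_of_mem h (Finset.mem_univ x₀)
          calc (Finset.image h' Finset.univ).card
              ≤ ((Finset.image h Finset.univ).erase m).card := Finset.card_le_card hsub
            _ = (Finset.image h Finset.univ).card - 1 := Finset.card_erase_of_mem hm_img
            _ ≤ n := by omega
        have hIH := IH h' hcard' hh'0 hlev'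
        have hQ : Φ * (∑ x ∈ B, π x) ≤ ∑ x ∈ B, ∑ y ∈ Bᶜ, π x * P x y :=
          hlev m' hm'0 hBne
        have hmm' : (0:ℝ) ≤ m - m' := by linarith
        have hQ2 : (m - m') * (Φ * (∑ x ∈ B, π x))
            ≤ (m - m') * ∑ x ∈ B, ∑ y ∈ Bᶜ, π x * P x y :=
          mul_le_mul_of_nonneg_left hQ hmm'
        rw [sum1, sum2]
        nlinarith [hIH, hQ2]
      · -- h is constant equal to m
        have hconst : ∀ x, h x = m := by
          intro x
          by_contra hne
          have h1 : h x < m := lt_of_le_of_ne (hle_m x) hne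
          exact hS' ⟨h x, Finset.mem_filter.2
            ⟨Finset.mem_image_of_mem h (Finset.mem_univ x), h1⟩⟩
        have hfu : Finset.univ.filter (fun x => (0:ℝ) < h x) = Finset.univ := by
          ext x; simp [hconst, hm0]
        have hΦ0 : Φ ≤ 0 := by
          have := hlev 0 le_rfl (by rw [hfu]; exact Finset.univ_nonempty)
          rw [hfu] at this
          simp only [Finset.compl_univ, Finset.sum_empty, Finset.sum_const_zero] at this
          have hπpos : 0 < ∑ x, π x := Finset.sum_pos (fun x _ => hπ0 x) Finset.univ_nonempty
          by_contra hc
          push_neg at hc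
          nlinarith
        have hLHS : 2 * (Φ * ∑ x, π x * h x) ≤ 0 := by
          have h1 : 0 ≤ ∑ x, π x * h x :=
            Finset.sum_nonneg fun x _ => mul_nonneg (hπ0 x).le (hh0 x)
          nlinarith
        calc 2 * (Φ * ∑ x, π x * h x) ≤ 0 := hLHS
          _ ≤ ∑ x, ∑ y, π x * P x y * |h x - h y| := by
            apply Finset.sum_nonneg; intro x _
            apply Finset.sum_nonneg; intro y _
            exact mul_nonneg (mul_nonneg (hπ0 x).le (hP0 x y)) (abs_nonneg _)


/-- **discrete Cheeger inequality.** Let `λ₂` be the second largest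
eigenvalue of a reversible irreducible transition matrix `P` on a finite state space
with stationary measure `π` (i.e. the largest eigenvalue on functions of `π`-mean
zero), and let `Φ = min_{A : 0 < π(A) ≤ 1/2} Q(A)/π(A)` with
`Q(A) = Σ_{x∈A, y∉A} π(x)P(x,y)`. Then `Φ²/2 ≤ 1 - λ₂ ≤ 2Φ`. -/
theorem stmt17 {Ω : Type*} [Fintype Ω] [Nonempty Ω] [DecidableEq Ω]
    (P : Matrix Ω Ω ℝ) (π : Ω → ℝ)
    (hP0 : ∀ x y, 0 ≤ P x y) (hP1 : ∀ x, ∑ y, P x y = 1)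
    (hπ0 : ∀ x, 0 < π x) (hπ1 : ∑ x, π x = 1)
    (hrev : ∀ x y, π x * P x y = π y * P y x)
    (hirr : ∀ x y, ∃ t : ℕ, 0 < (P ^ t) x y)
    (lam2 : ℝ)
    (hlam2 : IsGreatest {r : ℝ | ∃ f : Ω → ℝ, f ≠ 0 ∧ (∑ v, π v * f v) = 0 ∧
      P.mulVec f = r • f} lam2)
    (Φ : ℝ)
    (hΦ : IsLeast {r : ℝ | ∃ A : Finset Ω,
      0 < (∑ x ∈ A, π x) ∧ (∑ x ∈ A, π x) ≤ 1 / 2 ∧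
      r = (∑ x ∈ A, ∑ y ∈ Aᶜ, π x * P x y) / (∑ x ∈ A, π x)} Φ) :
    Φ ^ 2 / 2 ≤ 1 - lam2 ∧ 1 - lam2 ≤ 2 * Φ := by
  classical
  obtain ⟨A₀, hA₀pos, hA₀half, hA₀eq⟩ := hΦ.1
  have hΦ0 : 0 ≤ Φ := by
    rw [hA₀eq]
    apply div_nonneg _ hA₀pos.le
    apply Finset.sum_nonneg; intro x _
    apply Finset.sum_nonneg; intro y _
    exact mul_nonneg (hπ0 x).le (hP0 x y)
  obtain ⟨f₂, hf₂0, hf₂mean, hf₂eig⟩ := hlam2.1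
  have hf₂eig' : ∀ x, ∑ y, P x y * f₂ y = lam2 * f₂ x := by
    intro x
    have := congrFun hf₂eig x
    simpa [Matrix.mulVec, dotProduct] using this
  have hex : ∃ x, f₂ x ≠ 0 := by
    by_contra hc
    push_neg at hc
    exact hf₂0 (funext hc)
  have hN₂ : 0 < ∑ x, π x * f₂ x ^ 2 := by
    obtain ⟨z, hz⟩ := hex
    apply Finset.sum_pos'
    · intro x _
      exact mul_nonneg (hπ0 x).le (sq_nonneg _)
    · exact ⟨z, Finset.mem_univ z, mul_pos (hπ0 z) (by positivity)⟩
  have heig_inner : ∑ x, ∑ y, π x * P x y * f₂ x * f₂ y = lam2 * ∑ x, π x * f₂ x ^ 2 := by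
    rw [Finset.mul_sum]
    apply Finset.sum_congr rfl
    intro x _
    calc ∑ y, π x * P x y * f₂ x * f₂ y = (π x * f₂ x) * ∑ y, P x y * f₂ y := by
          rw [Finset.mul_sum]; apply Finset.sum_congr rfl; intros; ring
      _ = lam2 * (π x * f₂ x ^ 2) := by rw [hf₂eig']; ring
  have hlam2le1 : lam2 ≤ 1 := by
    have hd := dirichlet_id P π hP1 hrev f₂
    rw [heig_inner] at hd
    have hnn : 0 ≤ ∑ x, ∑ y, π x * P x y * (f₂ x - f₂ y) ^ 2 := by
      apply Finset.sum_nonneg; intro x _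
      apply Finset.sum_nonneg; intro y _
      exact mul_nonneg (mul_nonneg (hπ0 x).le (hP0 x y)) (sq_nonneg _)
    nlinarith
  constructor
  · -- hard direction : Φ²/2 ≤ 1 - lam2
    have core : ∀ f : Ω → ℝ, (P.mulVec f = lam2 • f) →
        (Finset.univ.filter (fun x => 0 < f x)).Nonempty →
        (∑ x ∈ Finset.univ.filter (fun x => 0 < f x), π x) ≤ 1/2 →
        Φ ^ 2 / 2 ≤ 1 - lam2 := by
      intro f heigf hAne hAhalf
      set A := Finset.univ.filter (fun x => 0 < f x) with hA_def
      set g : Ω → ℝ := fun x => max (f x) 0 with hg_def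
      have hg0 : ∀ x, 0 ≤ g x := fun x => le_max_right _ _
      have hgf : ∀ x, f x ≤ g x := fun x => le_max_left _ _
      have heigf' : ∀ x, ∑ y, P x y * f y = lam2 * f x := by
        intro x
        have := congrFun heigf x
        simpa [Matrix.mulVec, dotProduct] using this
      have hgA : ∀ x, x ∈ A ↔ 0 < g x := by
        intro x
        simp only [hA_def, Finset.mem_filter, Finset.mem_univ, true_and, hg_def,
          lt_max_iff, lt_self_iff_false, or_false]
      set N := ∑ x, π x * g x ^ 2 with hN_def
      have hN : 0 < N := by
        obtain ⟨z, hz⟩ := hAne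
        apply Finset.sum_pos'
        · intro x _; exact mul_nonneg (hπ0 x).le (sq_nonneg _)
        · refine ⟨z, Finset.mem_univ z, mul_pos (hπ0 z) ?_⟩
          have := (hgA z).1 hz
          positivity
      have hkey : lam2 * N ≤ ∑ x, ∑ y, π x * P x y * g x * g y := by
        have hterm : ∀ x, lam2 * (π x * g x ^ 2) ≤ ∑ y, π x * P x y * g x * g y := by
          intro x
          by_cases hx : 0 < f x
          · have hgx : g x = f x := max_eq_left hx.le
            have h1 : lam2 * f x ≤ ∑ y, P x y * g y := by
              rw [← heigf' x]
              apply Finset.sum_le_sum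
              intro y _
              exact mul_le_mul_of_nonneg_left (hgf y) (hP0 x y)
            have h2 : ∑ y, π x * P x y * g x * g y = (π x * g x) * ∑ y, P x y * g y := by
              rw [Finset.mul_sum]; apply Finset.sum_congr rfl; intros; ring
            rw [h2]
            have h3 : (π x * g x) * (lam2 * f x) ≤ (π x * g x) * ∑ y, P x y * g y :=
              mul_le_mul_of_nonneg_left h1 (mul_nonneg (hπ0 x).le (hg0 x))
            calc lam2 * (π x * g x ^ 2) = (π x * g x) * (lam2 * f x) := by rw [hgx]; ring
              _ ≤ _ := h3
          · have hgx : g x = 0 := max_eq_right (not_lt.1 hx)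
            rw [hgx]
            simp
        calc lam2 * N = ∑ x, lam2 * (π x * g x ^ 2) := by rw [hN_def, Finset.mul_sum]
          _ ≤ _ := Finset.sum_le_sum fun x _ => hterm x
      have hd := dirichlet_id P π hP1 hrev g
      set E := ∑ x, ∑ y, π x * P x y * (g x - g y) ^ 2 with hE_def
      have hE0 : 0 ≤ E := by
        apply Finset.sum_nonneg; intro x _
        apply Finset.sum_nonneg; intro y _
        exact mul_nonneg (mul_nonneg (hπ0 x).le (hP0 x y)) (sq_nonneg _)
      have hEbound : E ≤ 2 * (1 - lam2) * N := by
        rw [hd, ← hN_def]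
        nlinarith [hkey]
      set h : Ω → ℝ := fun x => g x ^ 2 with hh_def
      have hlevel : ∀ t : ℝ, 0 ≤ t → (Finset.univ.filter (fun x => t < h x)).Nonempty →
          Φ * (∑ x ∈ Finset.univ.filter (fun x => t < h x), π x)
            ≤ ∑ x ∈ Finset.univ.filter (fun x => t < h x),
                ∑ y ∈ (Finset.univ.filter (fun x => t < h x))ᶜ, π x * P x y := by
        intro t ht hne
        set At := Finset.univ.filter (fun x => t < h x) with hAt_def
        have hsubA : At ⊆ A := by
          intro x hx
          rw [hAt_def, Finset.mem_filter] at hx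
          rw [hgA]
          rcases lt_or_eq_of_le (hg0 x) with hlt | heq
          · exact hlt
          · exfalso
            have hhx : h x = 0 := by show g x ^ 2 = 0; rw [← heq]; norm_num
            rw [hhx] at hx
            exact absurd hx.2 (not_lt.2 ht)
        have hπAt : 0 < ∑ x ∈ At, π x := Finset.sum_pos (fun x _ => hπ0 x) hne
        have hπAt2 : ∑ x ∈ At, π x ≤ 1/2 :=
          le_trans (Finset.sum_le_sum_of_subset_of_nonneg hsubA
            (fun x _ _ => (hπ0 x).le)) hAhalf
        have hmem : Φ ≤ (∑ x ∈ At, ∑ y ∈ Atᶜ, π x * P x y) / (∑ x ∈ At, π x) :=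
          hΦ.2 ⟨At, hπAt, hπAt2, rfl⟩
        rw [le_div_iff₀ hπAt] at hmem
        linarith
      have hco := coarea_id P π hP0 hπ0 hrev Φ h (fun x => sq_nonneg _) hlevel
      have hNh : ∑ x, π x * h x = N := rfl
      rw [hNh] at hco
      set D := ∑ x, ∑ y, π x * P x y * |h x - h y| with hD_def
      set F := ∑ x, ∑ y, π x * P x y * (g x + g y) ^ 2 with hF_def
      have hF0 : 0 ≤ F := by
        apply Finset.sum_nonneg; intro x _
        apply Finset.sum_nonneg; intro y _
        exact mul_nonneg (mul_nonneg (hπ0 x).le (hP0 x y)) (sq_nonneg _)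
      have hFbound : F ≤ 4 * N := by
        have hterm : ∀ x y : Ω, π x * P x y * (g x + g y) ^ 2
            ≤ 2 * (π x * P x y * g x ^ 2) + 2 * (π x * P x y * g y ^ 2) := by
          intro x y
          nlinarith [mul_nonneg (mul_nonneg (hπ0 x).le (hP0 x y)) (sq_nonneg (g x - g y))]
        calc F ≤ ∑ x, ∑ y, (2 * (π x * P x y * g x ^ 2) + 2 * (π x * P x y * g y ^ 2)) := by
              apply Finset.sum_le_sum; intro x _
              apply Finset.sum_le_sum; intro y _
              exact hterm x y
          _ = 2 * (∑ x, ∑ y, π x * P x y * g x ^ 2)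
              + 2 * (∑ x, ∑ y, π x * P x y * g y ^ 2) := by
              simp_rw [Finset.sum_add_distrib]
              rw [Finset.mul_sum, Finset.mul_sum]
              congr 1 <;> · apply Finset.sum_congr rfl; intros; rw [Finset.mul_sum]
          _ = 4 * N := by
              rw [rowsum_id P π hP1 (fun x => g x ^ 2), colsum_id P π hP1 hrev (fun x => g x ^ 2)]
              rw [hN_def]; ring
      have hCS : D ^ 2 ≤ E * F := by
        have habs2 : ∀ x y : Ω, |h x - h y| = |g x - g y| * (g x + g y) := by
          intro x y
          have h1 : h x - h y = (g x - g y) * (g x + g y) := by rw [hh_def]; ring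
          rw [h1, abs_mul, abs_of_nonneg (add_nonneg (hg0 x) (hg0 y))]
        set u : Ω × Ω → ℝ := fun p => Real.sqrt (π p.1 * P p.1 p.2) * |g p.1 - g p.2| with hu_def
        set v : Ω × Ω → ℝ := fun p => Real.sqrt (π p.1 * P p.1 p.2) * (g p.1 + g p.2) with hv_def
        have hDs : D = ∑ p : Ω × Ω, u p * v p := by
          rw [hD_def, Fintype.sum_prod_type]
          apply Finset.sum_congr rfl; intro x _
          apply Finset.sum_congr rfl; intro y _
          set p : Ω × Ω := (x, y) with hp_def
          show π p.1 * P p.1 p.2 * |h p.1 - h p.2| = u p * v p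
          rw [hu_def, hv_def, habs2]
          have hnn : 0 ≤ π p.1 * P p.1 p.2 := mul_nonneg (hπ0 _).le (hP0 _ _)
          calc π p.1 * P p.1 p.2 * (|g p.1 - g p.2| * (g p.1 + g p.2))
              = (Real.sqrt (π p.1 * P p.1 p.2) * Real.sqrt (π p.1 * P p.1 p.2))
                * (|g p.1 - g p.2| * (g p.1 + g p.2)) := by rw [Real.mul_self_sqrt hnn]
            _ = _ := by ring
        have hEs : E = ∑ p : Ω × Ω, u p ^ 2 := by
          rw [hE_def, Fintype.sum_prod_type]
          apply Finset.sum_congr rfl; intro x _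
          apply Finset.sum_congr rfl; intro y _
          set p : Ω × Ω := (x, y) with hp_def
          show π p.1 * P p.1 p.2 * (g p.1 - g p.2) ^ 2 = u p ^ 2
          rw [hu_def]
          have hnn : 0 ≤ π p.1 * P p.1 p.2 := mul_nonneg (hπ0 _).le (hP0 _ _)
          rw [mul_pow, Real.sq_sqrt hnn, sq_abs]
        have hFs : F = ∑ p : Ω × Ω, v p ^ 2 := by
          rw [hF_def, Fintype.sum_prod_type]
          apply Finset.sum_congr rfl; intro x _
          apply Finset.sum_congr rfl; intro y _
          set p : Ω × Ω := (x, y) with hp_def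
          show π p.1 * P p.1 p.2 * (g p.1 + g p.2) ^ 2 = v p ^ 2
          rw [hv_def]
          have hnn : 0 ≤ π p.1 * P p.1 p.2 := mul_nonneg (hπ0 _).le (hP0 _ _)
          rw [mul_pow, Real.sq_sqrt hnn]
        rw [hDs, hEs, hFs]
        exact Finset.sum_mul_sq_le_sq_mul_sq Finset.univ u v
      -- combine everything
      have hEF : E * F ≤ (2 * (1 - lam2) * N) * (4 * N) :=
        mul_le_mul hEbound hFbound hF0 (by nlinarith)
      have hD2 : (2 * (Φ * N)) ^ 2 ≤ D ^ 2 := by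
        have h1 : 0 ≤ 2 * (Φ * N) := by positivity
        nlinarith [hco]
      nlinarith [hD2, hCS, hEF, sq_nonneg N, hN, mul_pos hN hN]
    -- choose the right sign for the eigenfunction
    set Ap := Finset.univ.filter (fun x => 0 < f₂ x) with hAp_def
    set An := Finset.univ.filter (fun x => f₂ x < 0) with hAn_def
    have hApne : Ap.Nonempty := by
      by_contra hc
      rw [Finset.not_nonempty_iff_eq_empty] at hc
      have hall : ∀ x, f₂ x ≤ 0 := by
        intro x
        by_contra hx
        push_neg at hx
        have : x ∈ Ap := by rw [hAp_def]; simp [hx]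
        rw [hc] at this
        exact absurd this (Finset.notMem_empty x)
      have hz := (Finset.sum_eq_zero_iff_of_nonpos
        (fun x _ => mul_nonpos_of_nonneg_of_nonpos (hπ0 x).le (hall x))).1 hf₂mean
      apply hf₂0
      funext x
      have := hz x (Finset.mem_univ x)
      have hπx := (hπ0 x).ne'
      exact (mul_eq_zero.1 this).resolve_left hπx
    have hAnne : An.Nonempty := by
      by_contra hc
      rw [Finset.not_nonempty_iff_eq_empty] at hc
      have hall : ∀ x, 0 ≤ f₂ x := by
        intro x
        by_contra hx
        push_neg at hx
        have : x ∈ An := by rw [hAn_def]; simp [hx]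
        rw [hc] at this
        exact absurd this (Finset.notMem_empty x)
      have hz := (Finset.sum_eq_zero_iff_of_nonneg
        (fun x _ => mul_nonneg (hπ0 x).le (hall x))).1 hf₂mean
      apply hf₂0
      funext x
      have := hz x (Finset.mem_univ x)
      have hπx := (hπ0 x).ne'
      exact (mul_eq_zero.1 this).resolve_left hπx
    have hsplit : (∑ x ∈ Ap, π x) + (∑ x ∈ An, π x) ≤ 1 := by
      have hdisj : Disjoint Ap An := by
        rw [Finset.disjoint_left]
        intro x hx hx'
        rw [hAp_def, Finset.mem_filter] at hx
        rw [hAn_def, Finset.mem_filter] at hx'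
        linarith [hx.2, hx'.2]
      rw [← Finset.sum_union hdisj, ← hπ1]
      exact Finset.sum_le_sum_of_subset_of_nonneg (Finset.subset_univ _)
        (fun x _ _ => (hπ0 x).le)
    rcases le_or_gt (∑ x ∈ Ap, π x) (1/2) with hle | hgt
    · exact core f₂ hf₂eig hApne hle
    · have hneg_eig : P.mulVec (-f₂) = lam2 • (-f₂) := by
        rw [Matrix.mulVec_neg, hf₂eig, smul_neg]
      have hfe : Finset.univ.filter (fun x => 0 < (-f₂) x) = An := by
        ext x
        simp [hAn_def, neg_pos]
      refine core (-f₂) hneg_eig ?_ ?_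
      · rw [hfe]; exact hAnne
      · rw [hfe]; linarith
  · -- easy direction : 1 - lam2 ≤ 2Φ
    set a := ∑ x ∈ A₀, π x with ha_def
    set f : Ω → ℝ := fun x => (if x ∈ A₀ then (1:ℝ) else 0) - a with hf_def
    have hind : ∑ x, π x * (if x ∈ A₀ then (1:ℝ) else 0) = a := by
      have hterm : ∀ x : Ω, π x * (if x ∈ A₀ then (1:ℝ) else 0)
          = if x ∈ A₀ then π x else 0 := by
        intro x; simp only [mul_ite, mul_one, mul_zero]
      rw [Finset.sum_congr rfl fun x _ => hterm x, Finset.sum_ite_mem, Finset.univ_inter]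
    have hmean : ∑ x, π x * f x = 0 := by
      have : ∀ x : Ω, π x * f x = π x * (if x ∈ A₀ then (1:ℝ) else 0) - π x * a := by
        intro x; simp only [hf_def]; ring
      rw [Finset.sum_congr rfl fun x _ => this x, Finset.sum_sub_distrib, hind,
        ← Finset.sum_mul, hπ1]
      ring
    have hvar := cheeger_variational P π hπ0 hrev hP1 lam2 hlam2 f hmean
    have hd := dirichlet_id P π hP1 hrev f
    have hsq : ∑ x, π x * f x ^ 2 = a * (1 - a) := by
      have hterm : ∀ x : Ω, π x * f x ^ 2
          = π x * (if x ∈ A₀ then (1:ℝ) else 0) * (1 - 2*a) + a^2 * π x := by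
        intro x
        by_cases hx : x ∈ A₀ <;> simp only [hf_def, if_pos, if_neg, hx, if_true, if_false] <;> ring
      rw [Finset.sum_congr rfl fun x _ => hterm x, Finset.sum_add_distrib]
      have h1 : ∑ x, π x * (if x ∈ A₀ then (1:ℝ) else 0) * (1 - 2*a)
          = (∑ x, π x * (if x ∈ A₀ then (1:ℝ) else 0)) * (1 - 2*a) := by
        rw [Finset.sum_mul]
      have h2 : ∑ x : Ω, a^2 * π x = a^2 := by rw [← Finset.mul_sum, hπ1, mul_one]
      rw [h1, h2, hind]
      ring
    have hcut : ∑ x, ∑ y, π x * P x y * (f x - f y) ^ 2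
        = 2 * ∑ x ∈ A₀, ∑ y ∈ A₀ᶜ, π x * P x y := by
      have hterm : ∀ x y : Ω, (f x - f y)
          = (if x ∈ A₀ then (1:ℝ) else 0) - (if y ∈ A₀ then (1:ℝ) else 0) := by
        intro x y; simp only [hf_def]; ring
      calc ∑ x, ∑ y, π x * P x y * (f x - f y) ^ 2
          = ∑ x, ∑ y, π x * P x y *
              ((if x ∈ A₀ then (1:ℝ) else 0) - (if y ∈ A₀ then (1:ℝ) else 0)) ^ 2 := by
            apply Finset.sum_congr rfl; intro x _
            apply Finset.sum_congr rfl; intro y _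
            rw [hterm]
        _ = _ := cut_id P π hrev A₀
    have hQa : ∑ x ∈ A₀, ∑ y ∈ A₀ᶜ, π x * P x y = Φ * a := by
      rw [hA₀eq]
      field_simp
    rw [hcut, hsq, hQa] at hd
    rw [hsq] at hvar
    nlinarith [mul_nonneg (mul_nonneg (sub_nonneg.2 hlam2le1) hA₀pos.le)
      (by linarith : (0:ℝ) ≤ 1 - 2*a), hA₀pos]
end
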